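/- arXiv:1808.04677 — 10 statements merged into one kernel-verified Lean document; each statement's English description precedes it below -/
import Mathlib

section
/- Let q be a unital quantum channel on M_n with Kraus operators q_1,…,q_p, and let v_1,…,v_p ∈ M_m satisfy the trace-orthonormality condition tr_m(v_kᴴ * v_j) = δ_{kj}. If the matrix U := Σ_{k=1}^p q_k ⊗ v_k ∈ Matrix (Fin n × Fin m) (Fin n × Fin m) ℂ is unitary, then for every A ∈ M_n one has ptr_m(U * (A ⊗ I_m) * Uᴴ) = q(A); that is, the adjunction map Ad_U is a matrix 1-dilation of q. -/
open Matrix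
open scoped Kronecker

lemma kron_conjT {l m n p : Type*} (A : Matrix l m ℂ) (B : Matrix n p ℂ) :
    (A ⊗ₖ B)ᴴ = Aᴴ ⊗ₖ Bᴴ := by
  ext ⟨i, k⟩ ⟨j, l⟩
  simp [conjTranspose_apply, kroneckerMap_apply, mul_comm]

/-- If `U = ∑ k, qₖ ⊗ vₖ` is unitary, where the `qₖ` are Kraus operators of a
unital quantum channel `q` on `Mₙ` and the `vₖ ∈ M_m` are trace-orthonormal, then the partial
trace over the second factor of `Ad_U (A ⊗ I)` equals `q(A)`; i.e. `Ad_U` is a matrix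
1-dilation of `q`. -/
theorem unitary_matrix_factorization_is_one_dilation
    (n m p : ℕ) [NeZero n] [NeZero m]
    (qk : Fin p → Matrix (Fin n) (Fin n) ℂ)
    (hq_unital : ∑ k, qk k * (qk k)ᴴ = 1)
    (hq_tp : ∑ k, (qk k)ᴴ * qk k = 1)
    (v : Fin p → Matrix (Fin m) (Fin m) ℂ)
    (h_orth : ∀ k j, Matrix.trace ((v k)ᴴ * v j) / (m : ℂ) = if k = j then 1 else 0)
    (U : Matrix (Fin n × Fin m) (Fin n × Fin m) ℂ)
    (hU_def : U = ∑ k, (qk k) ⊗ₖ (v k))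
    (hU_unitary : U * Uᴴ = 1 ∧ Uᴴ * U = 1) :
    ∀ (A : Matrix (Fin n) (Fin n) ℂ) (i j : Fin n),
      (1 / (m : ℂ)) * ∑ k : Fin m,
          (U * (A ⊗ₖ (1 : Matrix (Fin m) (Fin m) ℂ)) * Uᴴ) (i, k) (j, k)
        = (∑ k, qk k * A * (qk k)ᴴ) i j := by
  intro A i j
  subst hU_def
  have hm : (m : ℂ) ≠ 0 := Nat.cast_ne_zero.mpr (NeZero.ne m)
  have hexp : (∑ s, (qk s) ⊗ₖ (v s)) * (A ⊗ₖ (1 : Matrix (Fin m) (Fin m) ℂ)) *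
      (∑ s, (qk s) ⊗ₖ (v s))ᴴ
      = ∑ s, ∑ t, (qk s * A * (qk t)ᴴ) ⊗ₖ (v s * (v t)ᴴ) := by
    rw [conjTranspose_sum, Finset.sum_mul, Finset.sum_mul]
    refine Finset.sum_congr rfl fun s _ => ?_
    rw [Finset.mul_sum]
    refine Finset.sum_congr rfl fun t _ => ?_
    rw [kron_conjT, ← mul_kronecker_mul, mul_one, ← mul_kronecker_mul]
  rw [hexp]
  have hsum : ∀ k : Fin m, (∑ s, ∑ t, (qk s * A * (qk t)ᴴ) ⊗ₖ (v s * (v t)ᴴ)) (i, k) (j, k)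
      = ∑ s, ∑ t, (qk s * A * (qk t)ᴴ) i j * (v s * (v t)ᴴ) k k := by
    intro k
    simp [Matrix.sum_apply, kroneckerMap_apply]
  simp only [hsum]
  rw [Finset.sum_comm (γ := Fin m)]
  have : ∀ s, ∑ k : Fin m, ∑ t, (qk s * A * (qk t)ᴴ) i j * (v s * (v t)ᴴ) k k
      = ∑ t, (qk s * A * (qk t)ᴴ) i j * Matrix.trace (v s * (v t)ᴴ) := by
    intro s
    rw [Finset.sum_comm]
    refine Finset.sum_congr rfl fun t _ => ?_
    rw [← Finset.mul_sum]
    rfl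
  simp only [this]
  have htr : ∀ s t, Matrix.trace (v s * (v t)ᴴ) = if t = s then (m : ℂ) else 0 := by
    intro s t
    have h := h_orth t s
    rw [div_eq_iff hm] at h
    rw [← Matrix.trace_mul_comm, h]
    split <;> simp
  have : ∀ s, ∑ t, (qk s * A * (qk t)ᴴ) i j * Matrix.trace (v s * (v t)ᴴ)
      = (m : ℂ) * (qk s * A * (qk s)ᴴ) i j := by
    intro s
    rw [Finset.sum_eq_single s]
    · rw [htr s s, if_pos rfl, mul_comm]
    · intro t _ ht
      rw [htr s t, if_neg ht, mul_zero]
    · intro h; exact absurd (Finset.mem_univ s) h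
  simp only [this]
  rw [← Finset.mul_sum, ← mul_assoc, one_div, inv_mul_cancel₀ hm, one_mul, Matrix.sum_apply]
end

section
/- Let q be a unital quantum channel on M_n and let U ∈ Matrix (Fin n × Fin m) (Fin n × Fin m) ℂ be unitary with ptr_m(U * (A ⊗ I_m) * Uᴴ) = q(A) for all A ∈ M_n (a matrix 1-dilation of q). Fix N ≥ 1 and work in Matrix (Fin n × (Fin N → Fin m)) (Fin n × (Fin N → Fin m)) ℂ, the realization of M_n ⊗ M_m^{⊗N}. Let σ_N be the linear map given by σ_N(X) ((a,f),(b,g)) = X ((a, f ∘ c), (b, g ∘ c)) where c : Fin N → Fin N is the cyclic shift c(i) = i+1 (mod N); let U_N be U acting on M_n and the 0-th tensor factor of M_m^{⊗N}, i.e. (U_N) ((a,f),(b,g)) = U ((a, f 0), (b, g 0)) · Π_{i≠0} δ_{f(i), g(i)}; and let α_N(X) := U_N * σ_N(X) * U_Nᴴ. Then for every M with 1 ≤ M ≤ N and every A ∈ M_n, the partial trace over the second index of the M-fold iterate satisfies m^{-N} · Σ_f (α_N^{(M)}(A ⊗ I)) ((a,f),(b,f)) = (q^{(M)}(A)) a b,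 where q^{(M)} is the M-fold composition q ∘ ⋯ ∘ q and A ⊗ I is the Kronecker product of A with the identity on Fin N → Fin m. That is, α_N is a matrix N-dilation of q. -/
open Matrix
open scoped Kronecker

/-!
Since `σ_N` is conjugation by a permutation and fixes `A ⊗ 1`, `α_N^M (A ⊗ 1) = V (A ⊗ 1) Vᴴ` with
`V = U₀ U₁ ⋯ U_{M-1}`, where `Uⱼ` is `U` acting on `Mₙ` and the `j`-th factor; for `M ≤ N` these
are distinct factors. The partial trace over the factors `1, …, M - 1` commutes with conjugation
by `U₀`, so by induction it leaves `U₀ (m^{M-1} q^{M-1}(A) ⊗ 1) U₀ᴴ`, and tracing out factor `0`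
gives `m^M q^M(A)` by the dilation property of `U`. The factors `M, …, N - 1` contribute `m^{N-M}`.
-/

open Finset

theorem Fintype.sum_ite_forall_ne_eq_sum_update {ι α M : Type*} [Fintype ι] [DecidableEq ι]
    [Fintype α] [DecidableEq α] [AddCommMonoid M] (f : ι → α) (i₀ : ι) (F : (ι → α) → M) :
    ∑ g : ι → α, (if ∀ i, i ≠ i₀ → f i = g i then F g else 0)
      = ∑ x, F (Function.update f i₀ x) := by
  rw [← sum_filter, ← sum_image fun x _ y _ h => Function.update_injective f i₀ h]
  congr 1
  ext g
  simp only [mem_filter, mem_univ, true_and, mem_image]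
  constructor
  · intro hg
    refine ⟨g i₀, funext fun i => ?_⟩
    by_cases hi : i = i₀
    · subst hi; simp
    · rw [Function.update_of_ne hi, hg i hi]
  · rintro ⟨x, rfl⟩ i hi
    rw [Function.update_of_ne hi]

theorem Fin.sum_comp_castLE {α M : Type*} [Fintype α] [AddCommMonoid M] {k N : ℕ} (h : k ≤ N)
    (G : (Fin k → α) → M) :
    ∑ f : Fin N → α, G (f ∘ Fin.castLE h) = Fintype.card α ^ (N - k) • ∑ t, G t := by
  obtain ⟨d, rfl⟩ := Nat.exists_eq_add_of_le h
  rw [← (Fin.appendEquiv k d).sum_comp, Fintype.sum_prod_type, sum_comm]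
  have hleft (t : Fin k → α) (s : Fin d → α) : Fin.appendEquiv k d (t, s) ∘ Fin.castLE h = t :=
    funext (Fin.append_left t s)
  simp [hleft, smul_sum]

section CyclicShift

variable {β : Type*} {k N : ℕ} [NeZero N]

theorem Fin.update_zero_comp_add_one_comp_castLE (h : k + 1 ≤ N) (f : Fin N → β) (x : β) :
    (Function.update f 0 x ∘ (· + 1)) ∘ Fin.castLE (k.le_succ.trans h)
      = Fin.tail (f ∘ Fin.castLE h) := by
  obtain ⟨N, rfl⟩ := Nat.exists_eq_succ_of_ne_zero (NeZero.ne N)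
  funext j
  have hj : Fin.castLE (k.le_succ.trans h) j + 1 = Fin.castLE h j.succ := by
    ext
    rw [Fin.val_add_one, if_neg (Fin.ne_of_lt ?_)]
    · simp
    · rw [Fin.lt_def, Fin.val_castLE, Fin.val_last]; omega
  simp only [Function.comp_apply, Fin.tail, hj]
  exact Function.update_of_ne (by simp) _ _

theorem Fin.forall_le_update_zero_add_one_iff (h : k + 1 ≤ N) (f g : Fin N → β) (x y : β) :
    (∀ j : Fin N, k ≤ (j : ℕ) → Function.update f 0 x (j + 1) = Function.update g 0 y (j + 1)) ↔
      x = y ∧ ∀ j : Fin N, k + 1 ≤ (j : ℕ) → f j = g j := by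
  obtain ⟨N, rfl⟩ := Nat.exists_eq_succ_of_ne_zero (NeZero.ne N)
  constructor
  · intro H
    refine ⟨by simpa using H (Fin.last N) (by rw [Fin.val_last]; omega), fun j hj => ?_⟩
    obtain rfl | ⟨i, rfl⟩ := Fin.eq_zero_or_eq_succ j
    · simp at hj
    · rw [Fin.val_succ] at hj
      simpa [Fin.coeSucc_eq_succ] using H i.castSucc (by rw [Fin.val_castSucc]; omega)
  · rintro ⟨rfl, H⟩ j hj
    by_cases hl : j = Fin.last N
    · simp [hl]
    · have hv : ((j + 1 : Fin (N + 1)) : ℕ) = j + 1 := by rw [Fin.val_add_one, if_neg hl]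
      have hne : j + 1 ≠ 0 := by simp [← Fin.val_ne_iff, hv]
      rw [Function.update_of_ne hne, Function.update_of_ne hne, H _ (by omega)]

end CyclicShift

section OnFactor

variable {R κ β ι γ : Type*} [CommSemiring R] [Fintype κ] [Fintype β] [DecidableEq β]
  [Fintype ι] [DecidableEq ι]

/-- `U` acting on `κ` and the `i₀`-th factor of `κ × (ι → β)`, i.e. `U ⊗ 1` up to reordering. -/
def Matrix.onFactor (U : Matrix (κ × β) (κ × β) R) (i₀ : ι) :
    Matrix (κ × (ι → β)) (κ × (ι → β)) R := fun i j =>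
  U (i.1, i.2 i₀) (j.1, j.2 i₀) *
    ∏ l ∈ univ.filter (fun l => l ≠ i₀), if i.2 l = j.2 l then 1 else 0

theorem Matrix.onFactor_mul_apply (U : Matrix (κ × β) (κ × β) R) (i₀ : ι)
    (Z : Matrix (κ × (ι → β)) γ R) (a : κ) (f : ι → β) (c : γ) :
    (U.onFactor i₀ * Z) (a, f) c
      = ∑ x, ∑ a', U (a, f i₀) (a', x) * Z (a', Function.update f i₀ x) c := by
  simp only [mul_apply, Fintype.sum_prod_type, onFactor, prod_boole, mem_filter, mem_univ, true_and,
    mul_ite, ite_mul, mul_one, mul_zero, zero_mul]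
  simp only [Fintype.sum_ite_forall_ne_eq_sum_update, Function.update_self]
  exact sum_comm

theorem Matrix.mul_conjTranspose_onFactor_apply [StarRing R] (U : Matrix (κ × β) (κ × β) R) (i₀ : ι)
    (Z : Matrix γ (κ × (ι → β)) R) (c : γ) (b : κ) (g : ι → β) :
    (Z * (U.onFactor i₀)ᴴ) c (b, g)
      = ∑ y, ∑ b', Z c (b', Function.update g i₀ y) * star (U (b, g i₀) (b', y)) := by
  rw [← conjTranspose_conjTranspose Z, ← conjTranspose_mul, conjTranspose_apply, onFactor_mul_apply]
  simp [star_sum, mul_comm]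

end OnFactor

section DilationIterate

variable {R κ β : Type*} [CommSemiring R] [StarRing R] [Fintype κ] [Fintype β]

theorem Matrix.mul_kronecker_one_mul_conjTranspose_apply [DecidableEq β]
    (U : Matrix (κ × β) (κ × β) R) (B : Matrix κ κ R) (i j : κ × β) :
    (U * (B ⊗ₖ (1 : Matrix β β R)) * Uᴴ) i j
      = ∑ x, ∑ a', ∑ b', U i (a', x) * B a' b' * star (U j (b', x)) := by
  simp only [mul_apply, Fintype.sum_prod_type, kroneckerMap_apply, one_apply, conjTranspose_apply,
    mul_ite, mul_one, mul_zero, sum_mul, sum_ite_eq', mem_univ, if_true]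
  exact sum_comm.trans (sum_congr rfl fun _ _ => sum_comm)

/-- `dilationIterate U A k = V (A ⊗ 1) Vᴴ` with `V = U₀ U₁ ⋯ U_{k-1}`, where `Uⱼ` is `U` acting on
`κ` and the `j`-th factor of `Fin k → β`. -/
def dilationIterate (U : Matrix (κ × β) (κ × β) R) (A : Matrix κ κ R) :
    (k : ℕ) → Matrix (κ × (Fin k → β)) (κ × (Fin k → β)) R
  | 0 => fun i j => A i.1 j.1
  | k + 1 => fun i j => ∑ x, ∑ a', ∑ b',
      U (i.1, i.2 0) (a', x) * dilationIterate U A k (a', Fin.tail i.2) (b', Fin.tail j.2) *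
        star (U (j.1, j.2 0) (b', x))

theorem sum_dilationIterate_apply_diag [DecidableEq β] (U : Matrix (κ × β) (κ × β) R)
    (q : Matrix κ κ R → Matrix κ κ R)
    (hU : ∀ B i j, ∑ x, (U * (B ⊗ₖ (1 : Matrix β β R)) * Uᴴ) (i, x) (j, x)
      = Fintype.card β • q B i j)
    (A : Matrix κ κ R) (k : ℕ) (a b : κ) :
    ∑ t, dilationIterate U A k (a, t) (b, t) = Fintype.card β ^ k • (q^[k] A) a b := by
  induction k generalizing a b with
  | zero => simp [dilationIterate]
  | succ k ih =>
    rw [← (Fin.consEquiv fun _ => β).sum_comp, Fintype.sum_prod_type]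
    simp only [Fin.consEquiv, Equiv.coe_fn_mk, dilationIterate, Fin.cons_zero, Fin.tail_cons]
    calc _ = ∑ x₀, ∑ x, ∑ a', ∑ b', U (a, x₀) (a', x) *
          (∑ t, dilationIterate U A k (a', t) (b', t)) * star (U (b, x₀) (b', x)) := by
            simp only [mul_sum, sum_mul]
            refine sum_congr rfl fun x₀ _ => ?_
            rw [sum_comm]
            refine sum_congr rfl fun x _ => ?_
            rw [sum_comm]
            refine sum_congr rfl fun a' _ => ?_
            rw [sum_comm]
      _ = Fintype.card β ^ k •
          ∑ x₀, (U * ((q^[k] A) ⊗ₖ (1 : Matrix β β R)) * Uᴴ) (a, x₀) (b, x₀) := by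
            simp only [ih, mul_kronecker_one_mul_conjTranspose_apply, smul_sum, mul_smul_comm,
              smul_mul_assoc]
      _ = _ := by rw [hU, smul_smul, pow_succ, Function.iterate_succ_apply']

end DilationIterate

section ConjShift

variable {R κ β : Type*} [CommSemiring R] [StarRing R] [Fintype κ] [Fintype β] [DecidableEq β]
  {N : ℕ} [NeZero N] {U : Matrix (κ × β) (κ × β) R}
  {σ α : Matrix (κ × (Fin N → β)) (κ × (Fin N → β)) R →
    Matrix (κ × (Fin N → β)) (κ × (Fin N → β)) R}

theorem apply_of_eq_onFactor_conj_shift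
    (hσ : ∀ X a b f g, σ X (a, f) (b, g) = X (a, f ∘ (· + 1)) (b, g ∘ (· + 1)))
    (hα : ∀ X, α X = U.onFactor 0 * σ X * (U.onFactor 0)ᴴ)
    (Y : Matrix (κ × (Fin N → β)) (κ × (Fin N → β)) R) (a b : κ) (f g : Fin N → β) :
    α Y (a, f) (b, g) = ∑ x, ∑ a', U (a, f 0) (a', x) * ∑ y, ∑ b',
      Y (a', Function.update f 0 x ∘ (· + 1)) (b', Function.update g 0 y ∘ (· + 1)) *
        star (U (b, g 0) (b', y)) := by
  rw [hα, Matrix.mul_assoc, onFactor_mul_apply]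
  simp only [mul_conjTranspose_onFactor_apply, hσ]

/-- For `k ≤ N` the `k` conjugations by `U` in `α^[k]` act on the distinct factors `0, …, k - 1`,
so `α^[k] (A ⊗ 1)` is `dilationIterate U A k ⊗ 1`. -/
theorem iterate_kronecker_one_apply
    (hσ : ∀ X a b f g, σ X (a, f) (b, g) = X (a, f ∘ (· + 1)) (b, g ∘ (· + 1)))
    (hα : ∀ X, α X = U.onFactor 0 * σ X * (U.onFactor 0)ᴴ) (A : Matrix κ κ R) {k : ℕ} (hk : k ≤ N)
    (a b : κ) (f g : Fin N → β) :
    α^[k] (A ⊗ₖ (1 : Matrix (Fin N → β) (Fin N → β) R)) (a, f) (b, g) =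
      if ∀ j : Fin N, k ≤ (j : ℕ) → f j = g j then
        dilationIterate U A k (a, f ∘ Fin.castLE hk) (b, g ∘ Fin.castLE hk)
      else 0 := by
  induction k generalizing a b f g with
  | zero => simp [dilationIterate, one_apply, funext_iff]
  | succ k ih =>
    rw [Function.iterate_succ_apply', apply_of_eq_onFactor_conj_shift hσ hα]
    simp only [ih (k.le_succ.trans hk), Function.comp_apply,
      Fin.forall_le_update_zero_add_one_iff hk, Fin.update_zero_comp_add_one_comp_castLE hk]
    split_ifs with hfg
    · simp only [and_iff_left hfg, ite_mul, zero_mul, sum_ite_irrel, sum_const_zero, sum_ite_eq,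
        mem_univ, if_true]
      have h0 : Fin.castLE hk 0 = 0 := Fin.ext (by simp)
      simp [dilationIterate, h0, mul_sum, mul_assoc]
    · simp only [eq_false hfg, and_false, if_false, zero_mul, sum_const_zero, mul_zero]

end ConjShift

theorem matrix_N_dilation_from_unitary_factorization_general
    (n m N : ℕ) [NeZero m] [NeZero N]
    (q : Matrix (Fin n) (Fin n) ℂ → Matrix (Fin n) (Fin n) ℂ)
    (U : Matrix (Fin n × Fin m) (Fin n × Fin m) ℂ)
    (hU_dil : ∀ (A : Matrix (Fin n) (Fin n) ℂ) (i j : Fin n),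
      (1 / (m : ℂ)) * ∑ k : Fin m,
          (U * (A ⊗ₖ (1 : Matrix (Fin m) (Fin m) ℂ)) * Uᴴ) (i, k) (j, k) = q A i j)
    -- the cyclic tensor-factor permutation `σ_N`
    (σ : Matrix (Fin n × (Fin N → Fin m)) (Fin n × (Fin N → Fin m)) ℂ →
         Matrix (Fin n × (Fin N → Fin m)) (Fin n × (Fin N → Fin m)) ℂ)
    (hσ : ∀ X (a b : Fin n) (f g : Fin N → Fin m),
      σ X (a, f) (b, g) = X (a, f ∘ (fun i : Fin N => i + 1)) (b, g ∘ (fun i : Fin N => i + 1)))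
    -- `U_N`, the unitary `U` acting on `Mₙ` and the 0-th tensor factor of `M_m^{⊗N}`
    (UN : Matrix (Fin n × (Fin N → Fin m)) (Fin n × (Fin N → Fin m)) ℂ)
    (hUN : ∀ (a b : Fin n) (f g : Fin N → Fin m),
      UN (a, f) (b, g)
        = U (a, f 0) (b, g 0) *
            ∏ i ∈ Finset.univ.filter (fun i : Fin N => i ≠ 0),
              (if f i = g i then (1 : ℂ) else 0))
    -- the `*`-automorphism `α_N = Ad_{U_N} ∘ σ_N`
    (α : Matrix (Fin n × (Fin N → Fin m)) (Fin n × (Fin N → Fin m)) ℂ →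
         Matrix (Fin n × (Fin N → Fin m)) (Fin n × (Fin N → Fin m)) ℂ)
    (hα : ∀ X, α X = UN * σ X * UNᴴ) :
    ∀ (M : ℕ), 1 ≤ M → M ≤ N →
      ∀ (A : Matrix (Fin n) (Fin n) ℂ) (a b : Fin n),
        (1 / (m : ℂ) ^ N) * ∑ f : Fin N → Fin m,
            (α^[M] (A ⊗ₖ (1 : Matrix (Fin N → Fin m) (Fin N → Fin m) ℂ))) (a, f) (b, f)
          = (q^[M] A) a b := by
  intro M _ hMN A a b
  obtain rfl : UN = U.onFactor 0 := by
    ext ⟨a, f⟩ ⟨b, g⟩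
    rw [hUN]
    rfl
  have hm : (m : ℂ) ≠ 0 := Nat.cast_ne_zero.mpr (NeZero.ne m)
  have hdil (B : Matrix (Fin n) (Fin n) ℂ) (i j : Fin n) :
      ∑ x, (U * (B ⊗ₖ (1 : Matrix (Fin m) (Fin m) ℂ)) * Uᴴ) (i, x) (j, x)
        = Fintype.card (Fin m) • q B i j := by
    rw [← hU_dil, Fintype.card_fin, nsmul_eq_mul]
    field_simp
  simp only [iterate_kronecker_one_apply hσ hα A hMN, implies_true, if_true]
  rw [Fin.sum_comp_castLE hMN (fun t => dilationIterate U A M (a, t) (b, t)),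
    sum_dilationIterate_apply_diag U q hdil, smul_smul, ← pow_add, Nat.sub_add_cancel hMN,
    Fintype.card_fin, nsmul_eq_mul, Nat.cast_pow]
  field_simp

/-- Theorem `main`: if a unital quantum channel `q` on `Mₙ` has a unitary matrix
1-dilation `U` acting on `Mₙ ⊗ M_m`, then the `*`-automorphism
`α_N = Ad_{U ⊗ 1} ∘ σ_N` of `Mₙ ⊗ M_m^{⊗N}` (where `σ_N` cyclically permutes the tensor
factors of `M_m^{⊗N}`) is a matrix `N`-dilation of `q`: for every `1 ≤ M ≤ N`, the partial
trace over `M_m^{⊗N}` of `α_N^{(M)} (A ⊗ 1)` equals `q^{(M)} (A)`. -/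
theorem matrix_N_dilation_from_unitary_factorization
    (n m N p : ℕ) [NeZero n] [NeZero m] [NeZero N]
    (q : Matrix (Fin n) (Fin n) ℂ → Matrix (Fin n) (Fin n) ℂ)
    (qk : Fin p → Matrix (Fin n) (Fin n) ℂ)
    (hq : ∀ A, q A = ∑ k, qk k * A * (qk k)ᴴ)
    (hq_unital : ∑ k, qk k * (qk k)ᴴ = 1)
    (hq_tp : ∑ k, (qk k)ᴴ * qk k = 1)
    (U : Matrix (Fin n × Fin m) (Fin n × Fin m) ℂ)
    (hU_unitary : U * Uᴴ = 1 ∧ Uᴴ * U = 1)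
    (hU_dil : ∀ (A : Matrix (Fin n) (Fin n) ℂ) (i j : Fin n),
      (1 / (m : ℂ)) * ∑ k : Fin m,
          (U * (A ⊗ₖ (1 : Matrix (Fin m) (Fin m) ℂ)) * Uᴴ) (i, k) (j, k) = q A i j)
    -- the cyclic tensor-factor permutation `σ_N`
    (σ : Matrix (Fin n × (Fin N → Fin m)) (Fin n × (Fin N → Fin m)) ℂ →
         Matrix (Fin n × (Fin N → Fin m)) (Fin n × (Fin N → Fin m)) ℂ)
    (hσ : ∀ X (a b : Fin n) (f g : Fin N → Fin m),
      σ X (a, f) (b, g) = X (a, f ∘ (fun i : Fin N => i + 1)) (b, g ∘ (fun i : Fin N => i + 1)))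
    -- `U_N`, the unitary `U` acting on `Mₙ` and the 0-th tensor factor of `M_m^{⊗N}`
    (UN : Matrix (Fin n × (Fin N → Fin m)) (Fin n × (Fin N → Fin m)) ℂ)
    (hUN : ∀ (a b : Fin n) (f g : Fin N → Fin m),
      UN (a, f) (b, g)
        = U (a, f 0) (b, g 0) *
            ∏ i ∈ Finset.univ.filter (fun i : Fin N => i ≠ 0),
              (if f i = g i then (1 : ℂ) else 0))
    -- the `*`-automorphism `α_N = Ad_{U_N} ∘ σ_N`
    (α : Matrix (Fin n × (Fin N → Fin m)) (Fin n × (Fin N → Fin m)) ℂ →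
         Matrix (Fin n × (Fin N → Fin m)) (Fin n × (Fin N → Fin m)) ℂ)
    (hα : ∀ X, α X = UN * σ X * UNᴴ) :
    ∀ (M : ℕ), 1 ≤ M → M ≤ N →
      ∀ (A : Matrix (Fin n) (Fin n) ℂ) (a b : Fin n),
        (1 / (m : ℂ) ^ N) * ∑ f : Fin N → Fin m,
            (α^[M] (A ⊗ₖ (1 : Matrix (Fin N → Fin m) (Fin N → Fin m) ℂ))) (a, f) (b, f)
          = (q^[M] A) a b :=
  matrix_N_dilation_from_unitary_factorization_general n m N q U hU_dil σ hσ UN hUN α hα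
end

section
/- Let q and q' be unital quantum channels on M_n admitting unitary matrix 1-dilations U ∈ Matrix (Fin n × Fin m) (Fin n × Fin m) ℂ and U' ∈ Matrix (Fin n × Fin m') (Fin n × Fin m') ℂ respectively, i.e. U, U' are unitary with ptr_m(U * (A ⊗ I_m) * Uᴴ) = q(A) and ptr_{m'}(U' * (A ⊗ I_{m'}) * U'ᴴ) = q'(A) for all A. Let t ∈ ℝ with 0 ≤ t ≤ 1. Define W ∈ Matrix (Fin n × (Fin m ⊕ Fin m')) (Fin n × (Fin m ⊕ Fin m')) ℂ blockwise by W ((a, inl s),(b, inl u)) = U ((a,s),(b,u)), W ((a, inr s),(b, inr u)) = U' ((a,s),(b,u)), and W = 0 on mixed blocks. Then W is unitary, and for every A ∈ M_n the weighted partial trace satisfies (t/m) · Σ_{s : Fin m} (W (A ⊗ I) Wᴴ) ((a, inl s),(b, inl s)) + ((1−t)/m') · Σ_{s : Fin m'} (W (A ⊗ I) Wᴴ) ((a, inr s),(b, inr s)) = (t · q(A) + (1−t) · q'(A)) a b. In particular the convex combination t·q + (1−t)·q' is matrix factorizable. -/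
open Matrix
open scoped Kronecker

/-- convex combinations of matrix factorizable channels are matrix factorizable:
given unitary 1-dilations `U`, `U'` of channels `q`, `q'`, the block-diagonal matrix
`W = U ⊕ U'` is unitary and the `(t · tr_m) ⊕ ((1-t) · tr_{m'})`-weighted partial trace of
`Ad_W (A ⊗ I)` is `t·q(A) + (1-t)·q'(A)`. -/
theorem convex_combination_matrix_factorizable
    (n m m' p p' : ℕ) [NeZero n] [NeZero m] [NeZero m']
    (q q' : Matrix (Fin n) (Fin n) ℂ → Matrix (Fin n) (Fin n) ℂ)
    (qk : Fin p → Matrix (Fin n) (Fin n) ℂ)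
    (hq : ∀ A, q A = ∑ k, qk k * A * (qk k)ᴴ)
    (hq_unital : ∑ k, qk k * (qk k)ᴴ = 1)
    (hq_tp : ∑ k, (qk k)ᴴ * qk k = 1)
    (qk' : Fin p' → Matrix (Fin n) (Fin n) ℂ)
    (hq' : ∀ A, q' A = ∑ k, qk' k * A * (qk' k)ᴴ)
    (hq'_unital : ∑ k, qk' k * (qk' k)ᴴ = 1)
    (hq'_tp : ∑ k, (qk' k)ᴴ * qk' k = 1)
    (U : Matrix (Fin n × Fin m) (Fin n × Fin m) ℂ)
    (hU_unitary : U * Uᴴ = 1 ∧ Uᴴ * U = 1)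
    (hU_dil : ∀ (A : Matrix (Fin n) (Fin n) ℂ) (i j : Fin n),
      (1 / (m : ℂ)) * ∑ k : Fin m,
          (U * (A ⊗ₖ (1 : Matrix (Fin m) (Fin m) ℂ)) * Uᴴ) (i, k) (j, k) = q A i j)
    (U' : Matrix (Fin n × Fin m') (Fin n × Fin m') ℂ)
    (hU'_unitary : U' * U'ᴴ = 1 ∧ U'ᴴ * U' = 1)
    (hU'_dil : ∀ (A : Matrix (Fin n) (Fin n) ℂ) (i j : Fin n),
      (1 / (m' : ℂ)) * ∑ k : Fin m',
          (U' * (A ⊗ₖ (1 : Matrix (Fin m') (Fin m') ℂ)) * U'ᴴ) (i, k) (j, k) = q' A i j)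
    (t : ℝ) (ht0 : 0 ≤ t) (ht1 : t ≤ 1)
    (W : Matrix (Fin n × (Fin m ⊕ Fin m')) (Fin n × (Fin m ⊕ Fin m')) ℂ)
    (hW_ll : ∀ (a b : Fin n) (s u : Fin m),
      W (a, Sum.inl s) (b, Sum.inl u) = U (a, s) (b, u))
    (hW_rr : ∀ (a b : Fin n) (s u : Fin m'),
      W (a, Sum.inr s) (b, Sum.inr u) = U' (a, s) (b, u))
    (hW_lr : ∀ (a b : Fin n) (s : Fin m) (u : Fin m'),
      W (a, Sum.inl s) (b, Sum.inr u) = 0)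
    (hW_rl : ∀ (a b : Fin n) (s : Fin m') (u : Fin m),
      W (a, Sum.inr s) (b, Sum.inl u) = 0) :
    (W * Wᴴ = 1 ∧ Wᴴ * W = 1) ∧
    ∀ (A : Matrix (Fin n) (Fin n) ℂ) (a b : Fin n),
      ((t : ℂ) / (m : ℂ)) * ∑ s : Fin m,
          (W * (A ⊗ₖ (1 : Matrix (Fin m ⊕ Fin m') (Fin m ⊕ Fin m') ℂ)) * Wᴴ)
            (a, Sum.inl s) (b, Sum.inl s)
        + ((1 - (t : ℂ)) / (m' : ℂ)) * ∑ s : Fin m',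
          (W * (A ⊗ₖ (1 : Matrix (Fin m ⊕ Fin m') (Fin m ⊕ Fin m') ℂ)) * Wᴴ)
            (a, Sum.inr s) (b, Sum.inr s)
        = ((t : ℂ) • q A + (1 - (t : ℂ)) • q' A) a b := by

  obtain ⟨hU1, hU2⟩ := hU_unitary
  obtain ⟨hU'1, hU'2⟩ := hU'_unitary
  have key_ll : ∀ (A : Matrix (Fin n) (Fin n) ℂ) (a b : Fin n) (s u : Fin m),
      (W * (A ⊗ₖ (1 : Matrix (Fin m ⊕ Fin m') (Fin m ⊕ Fin m') ℂ)) * Wᴴ)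
          (a, Sum.inl s) (b, Sum.inl u)
        = (U * (A ⊗ₖ (1 : Matrix (Fin m) (Fin m) ℂ)) * Uᴴ) (a, s) (b, u) := by
    intro A a b s u
    simp only [Matrix.mul_apply, conjTranspose_apply, Fintype.sum_prod_type, Fintype.sum_sum_type,
      kroneckerMap_apply, Matrix.one_apply, hW_ll, hW_lr, Sum.inl.injEq, reduceIte,
      star_zero, mul_zero, zero_mul, Finset.sum_const_zero, add_zero, mul_ite, ite_mul,
      mul_one]
    congr 1
    ext c
    simp
  have key_rr : ∀ (A : Matrix (Fin n) (Fin n) ℂ) (a b : Fin n) (s u : Fin m'),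
      (W * (A ⊗ₖ (1 : Matrix (Fin m ⊕ Fin m') (Fin m ⊕ Fin m') ℂ)) * Wᴴ)
          (a, Sum.inr s) (b, Sum.inr u)
        = (U' * (A ⊗ₖ (1 : Matrix (Fin m') (Fin m') ℂ)) * U'ᴴ) (a, s) (b, u) := by
    intro A a b s u
    simp only [Matrix.mul_apply, conjTranspose_apply, Fintype.sum_prod_type, Fintype.sum_sum_type,
      kroneckerMap_apply, Matrix.one_apply, hW_rr, hW_rl, Sum.inr.injEq, reduceIte,
      star_zero, mul_zero, zero_mul, Finset.sum_const_zero, zero_add, mul_ite, ite_mul,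
      mul_one]
    congr 1
    ext c
    simp
  refine ⟨⟨?_, ?_⟩, ?_⟩
  · ext ⟨a, x⟩ ⟨b, y⟩
    cases x with
    | inl s =>
      cases y with
      | inl u =>
        have h := congrFun (congrFun hU1 (a, s)) (b, u)
        simp only [Matrix.mul_apply, conjTranspose_apply, Fintype.sum_prod_type,
          Fintype.sum_sum_type, hW_ll, hW_lr, star_zero, mul_zero, Finset.sum_const_zero,
          add_zero, Matrix.one_apply, Prod.mk.injEq, Sum.inl.injEq] at h ⊢
        exact h
      | inr u =>
        simp [Matrix.mul_apply, conjTranspose_apply, Fintype.sum_prod_type,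
          Fintype.sum_sum_type, hW_lr, hW_rl, Matrix.one_apply, Prod.ext_iff]
    | inr s =>
      cases y with
      | inl u =>
        simp [Matrix.mul_apply, conjTranspose_apply, Fintype.sum_prod_type,
          Fintype.sum_sum_type, hW_lr, hW_rl, Matrix.one_apply, Prod.ext_iff]
      | inr u =>
        have h := congrFun (congrFun hU'1 (a, s)) (b, u)
        simp only [Matrix.mul_apply, conjTranspose_apply, Fintype.sum_prod_type,
          Fintype.sum_sum_type, hW_rr, hW_rl, star_zero, mul_zero, Finset.sum_const_zero,
          zero_add, Matrix.one_apply, Prod.mk.injEq, Sum.inr.injEq] at h ⊢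
        exact h
  · ext ⟨a, x⟩ ⟨b, y⟩
    cases x with
    | inl s =>
      cases y with
      | inl u =>
        have h := congrFun (congrFun hU2 (a, s)) (b, u)
        simp only [Matrix.mul_apply, conjTranspose_apply, Fintype.sum_prod_type,
          Fintype.sum_sum_type, hW_ll, hW_rl, star_zero, mul_zero, zero_mul,
          Finset.sum_const_zero, add_zero, Matrix.one_apply, Prod.mk.injEq,
          Sum.inl.injEq] at h ⊢
        exact h
      | inr u =>
        simp [Matrix.mul_apply, conjTranspose_apply, Fintype.sum_prod_type,
          Fintype.sum_sum_type, hW_lr, hW_rl, Matrix.one_apply, Prod.ext_iff]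
    | inr s =>
      cases y with
      | inl u =>
        simp [Matrix.mul_apply, conjTranspose_apply, Fintype.sum_prod_type,
          Fintype.sum_sum_type, hW_lr, hW_rl, Matrix.one_apply, Prod.ext_iff]
      | inr u =>
        have h := congrFun (congrFun hU'2 (a, s)) (b, u)
        simp only [Matrix.mul_apply, conjTranspose_apply, Fintype.sum_prod_type,
          Fintype.sum_sum_type, hW_rr, hW_lr, star_zero, mul_zero, zero_mul,
          Finset.sum_const_zero, zero_add, Matrix.one_apply, Prod.mk.injEq,
          Sum.inr.injEq] at h ⊢
        exact h
  · intro A a b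
    have h1 := hU_dil A a b
    have h2 := hU'_dil A a b
    have e1 : ∑ s : Fin m,
        (W * (A ⊗ₖ (1 : Matrix (Fin m ⊕ Fin m') (Fin m ⊕ Fin m') ℂ)) * Wᴴ)
          (a, Sum.inl s) (b, Sum.inl s)
        = ∑ s : Fin m, (U * (A ⊗ₖ (1 : Matrix (Fin m) (Fin m) ℂ)) * Uᴴ) (a, s) (b, s) :=
      Finset.sum_congr rfl fun s _ => key_ll A a b s s
    have e2 : ∑ s : Fin m',
        (W * (A ⊗ₖ (1 : Matrix (Fin m ⊕ Fin m') (Fin m ⊕ Fin m') ℂ)) * Wᴴ)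
          (a, Sum.inr s) (b, Sum.inr s)
        = ∑ s : Fin m', (U' * (A ⊗ₖ (1 : Matrix (Fin m') (Fin m') ℂ)) * U'ᴴ) (a, s) (b, s) :=
      Finset.sum_congr rfl fun s _ => key_rr A a b s s
    rw [e1, e2]
    have : ((t : ℂ) / (m : ℂ)) * ∑ s : Fin m,
          (U * (A ⊗ₖ (1 : Matrix (Fin m) (Fin m) ℂ)) * Uᴴ) (a, s) (b, s)
        = (t : ℂ) * ((1 / (m : ℂ)) * ∑ s : Fin m,
          (U * (A ⊗ₖ (1 : Matrix (Fin m) (Fin m) ℂ)) * Uᴴ) (a, s) (b, s)) := by ring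
    rw [this, h1]
    have : ((1 - (t : ℂ)) / (m' : ℂ)) * ∑ s : Fin m',
          (U' * (A ⊗ₖ (1 : Matrix (Fin m') (Fin m') ℂ)) * U'ᴴ) (a, s) (b, s)
        = (1 - (t : ℂ)) * ((1 / (m' : ℂ)) * ∑ s : Fin m',
          (U' * (A ⊗ₖ (1 : Matrix (Fin m') (Fin m') ℂ)) * U'ᴴ) (a, s) (b, s)) := by ring
    rw [this, h2]
    simp [Matrix.add_apply, Matrix.smul_apply, smul_eq_mul]
end

section
/- Let q and q' be unital quantum channels on M_n admitting unitary matrix 1-dilations U ∈ Matrix (Fin n × Fin m) (Fin n × Fin m) ℂ and U' ∈ Matrix (Fin n × Fin m') (Fin n × Fin m') ℂ respectively, i.e. U, U' are unitary with ptr_m(U * (A ⊗ I_m) * Uᴴ) = q(A) and ptr_{m'}(U' * (A ⊗ I_{m'}) * U'ᴴ) = q'(A) for all A ∈ M_n. In Matrix (Fin n × Fin m × Fin m') (Fin n × Fin m × Fin m') ℂ, let U'_{13} be U' acting on the first and third factors, (U'_{13}) ((a,k,l),(b,k',l')) = δ_{k,k'} · U' ((a,l),(b,l')), and let U_{12} =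 U ⊗ I_{m'}. Then W := U'_{13} * U_{12} is unitary and for all A ∈ M_n: (1/(m·m')) · Σ_{k,l} (W * (A ⊗ I_{m·m'}) * Wᴴ) ((a,k,l),(b,k,l)) = (q'(q(A))) a b. In particular the composition q' ∘ q is matrix factorizable. -/
open Matrix
open scoped Kronecker

/-!
`U'₁₃` and `U₁₂` are reindexings of `U' ⊗ 1` and `U ⊗ 1`, hence unitary. The normalized partial
trace over `m × m'` is the partial trace over `m'` of the partial trace over `m`. Since `U'₁₃`
acts trivially on the `m`-factor, the inner partial trace passes through it and turns
`U₁₂ (A ⊗ 1) U₁₂ᴴ = (U (A ⊗ 1) Uᴴ)₁₂` into `q(A) ⊗ 1`; the outer one then yields `q'(q(A))`.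
-/

def Equiv.prodSwapAssoc (α β γ : Type*) : (α × γ) × β ≃ α × β × γ where
  toFun x := (x.1.1, x.2, x.1.2)
  invFun x := ((x.1, x.2.2), x.2.1)
  left_inv _ := rfl
  right_inv _ := rfl

namespace Matrix

theorem mem_unitary_iff_conjTranspose {R l : Type*} [Semiring R] [StarRing R] [Fintype l]
    [DecidableEq l] {U : Matrix l l R} :
    U ∈ unitary (Matrix l l R) ↔ U * Uᴴ = 1 ∧ Uᴴ * U = 1 := by
  rw [Unitary.mem_iff, and_comm, star_eq_conjTranspose]

section PartialTrace

variable {R : Type*} [Semifield R] {l l' m m' n p : Type*} [Fintype n]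

def partialTrace (X : Matrix (l × n) (m × n) R) : Matrix l m R :=
  (Fintype.card n : R)⁻¹ • of fun i j => ∑ k, X (i, k) (j, k)

theorem partialTrace_apply (X : Matrix (l × n) (m × n) R) (i : l) (j : m) :
    partialTrace X i j = (Fintype.card n : R)⁻¹ * ∑ k, X (i, k) (j, k) := rfl

theorem partialTrace_kronecker_one_mul [DecidableEq n] [Fintype l']
    (V : Matrix l l' R) (X : Matrix (l' × n) (m × n) R) :
    partialTrace ((V ⊗ₖ (1 : Matrix n n R)) * X) = V * partialTrace X := by
  ext i j
  simp only [partialTrace_apply, mul_apply, kroneckerMap_apply, one_apply, mul_ite, mul_one,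
    mul_zero, ite_mul, zero_mul, Fintype.sum_prod_type, Finset.sum_ite_eq, Finset.mem_univ,
    ↓reduceIte, Finset.mul_sum]
  rw [Finset.sum_comm]
  simp only [mul_left_comm]

theorem partialTrace_mul_kronecker_one [DecidableEq n] [Fintype m']
    (X : Matrix (l × n) (m' × n) R) (W : Matrix m' m R) :
    partialTrace (X * (W ⊗ₖ (1 : Matrix n n R))) = partialTrace X * W := by
  ext i j
  simp only [partialTrace_apply, mul_apply, kroneckerMap_apply, one_apply, mul_ite, mul_one,
    mul_zero, Fintype.sum_prod_type, Finset.sum_ite_eq', Finset.mem_univ, ↓reduceIte,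
    Finset.mul_sum, Finset.sum_mul]
  rw [Finset.sum_comm]
  simp only [mul_assoc]

theorem partialTrace_prod [Fintype p] (Y : Matrix (l × n × p) (m × n × p) R) :
    partialTrace Y = partialTrace (partialTrace
      (Y.submatrix (Equiv.prodSwapAssoc l n p) (Equiv.prodSwapAssoc m n p))) := by
  ext i j
  simp only [partialTrace_apply, submatrix_apply, Fintype.card_prod, Nat.cast_mul, mul_inv,
    Finset.mul_sum, Fintype.sum_prod_type]
  rw [Finset.sum_comm]
  simp only [Equiv.prodSwapAssoc, Equiv.coe_fn_mk, mul_left_comm, mul_assoc]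

end PartialTrace

section Legs

variable {R : Type*} [CommSemiring R] {l l' l'' n n' n'' p p' p'' : Type*}

-- Leg numbering: `legij U` acts as `U` on the factors `i` and `j` of a threefold product.
def leg12 (U : Matrix (l × n) (l' × n') R) (p : Type*) [DecidableEq p] :
    Matrix (l × n × p) (l' × n' × p) R :=
  (U ⊗ₖ (1 : Matrix p p R)).submatrix (Equiv.prodAssoc l n p).symm (Equiv.prodAssoc l' n' p).symm

def leg13 (U : Matrix (l × p) (l' × p') R) (n : Type*) [DecidableEq n] :
    Matrix (l × n × p) (l' × n × p') R :=
  (U ⊗ₖ (1 : Matrix n n R)).submatrix (Equiv.prodSwapAssoc l n p).symm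
    (Equiv.prodSwapAssoc l' n p').symm

theorem leg12_apply [DecidableEq p] (U : Matrix (l × n) (l' × n') R) (a : l) (b : l') (k : n)
    (k' : n') (r r' : p) :
    leg12 U p (a, k, r) (b, k', r') = U (a, k) (b, k') * if r = r' then 1 else 0 :=
  rfl

theorem leg13_apply [DecidableEq n] (U : Matrix (l × p) (l' × p') R) (a : l) (b : l') (k k' : n)
    (r : p) (r' : p') :
    leg13 U n (a, k, r) (b, k', r') = (if k = k' then 1 else 0) * U (a, r) (b, r') := by
  simp [leg13, Equiv.prodSwapAssoc, one_apply, mul_comm]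

theorem leg12_mul [Fintype l'] [Fintype n'] [Fintype p] [DecidableEq p]
    (U : Matrix (l × n) (l' × n') R) (V : Matrix (l' × n') (l'' × n'') R) :
    leg12 (U * V) p = leg12 U p * leg12 V p := by
  rw [leg12, leg12, leg12, submatrix_mul_equiv, ← mul_kronecker_mul, Matrix.one_mul]

theorem leg13_mul [Fintype l'] [Fintype p'] [Fintype n] [DecidableEq n]
    (U : Matrix (l × p) (l' × p') R) (V : Matrix (l' × p') (l'' × p'') R) :
    leg13 (U * V) n = leg13 U n * leg13 V n := by
  rw [leg13, leg13, leg13, submatrix_mul_equiv, ← mul_kronecker_mul, Matrix.one_mul]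

theorem leg12_one [DecidableEq l] [DecidableEq n] [DecidableEq p] :
    leg12 (1 : Matrix (l × n) (l × n) R) p = 1 := by
  rw [leg12, one_kronecker_one, submatrix_one_equiv]

theorem leg13_one [DecidableEq l] [DecidableEq n] [DecidableEq p] :
    leg13 (1 : Matrix (l × p) (l × p) R) n = 1 := by
  rw [leg13, one_kronecker_one, submatrix_one_equiv]

theorem conjTranspose_leg12 [StarRing R] [DecidableEq p] (U : Matrix (l × n) (l' × n') R) :
    (leg12 U p)ᴴ = leg12 Uᴴ p := by
  rw [leg12, leg12, conjTranspose_submatrix, conjTranspose_kronecker, conjTranspose_one]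

theorem conjTranspose_leg13 [StarRing R] [DecidableEq n] (U : Matrix (l × p) (l' × p') R) :
    (leg13 U n)ᴴ = leg13 Uᴴ n := by
  rw [leg13, leg13, conjTranspose_submatrix, conjTranspose_kronecker, conjTranspose_one]

theorem leg12_mem_unitary [StarRing R] [Fintype l] [DecidableEq l] [Fintype n] [DecidableEq n]
    [Fintype p] [DecidableEq p] {U : Matrix (l × n) (l × n) R}
    (hU : U ∈ unitary (Matrix (l × n) (l × n) R)) :
    leg12 U p ∈ unitary (Matrix (l × n × p) (l × n × p) R) := by
  obtain ⟨h₁, h₂⟩ := Unitary.mem_iff.1 hU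
  rw [star_eq_conjTranspose] at h₁ h₂
  rw [Unitary.mem_iff, star_eq_conjTranspose, conjTranspose_leg12, ← leg12_mul, ← leg12_mul, h₁,
    h₂, leg12_one, and_self]

theorem leg13_mem_unitary [StarRing R] [Fintype l] [DecidableEq l] [Fintype n] [DecidableEq n]
    [Fintype p] [DecidableEq p] {U : Matrix (l × p) (l × p) R}
    (hU : U ∈ unitary (Matrix (l × p) (l × p) R)) :
    leg13 U n ∈ unitary (Matrix (l × n × p) (l × n × p) R) := by
  obtain ⟨h₁, h₂⟩ := Unitary.mem_iff.1 hU
  rw [star_eq_conjTranspose] at h₁ h₂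
  rw [Unitary.mem_iff, star_eq_conjTranspose, conjTranspose_leg13, ← leg13_mul, ← leg13_mul, h₁,
    h₂, leg13_one, and_self]

theorem kronecker_one_eq_leg12 [DecidableEq n] [DecidableEq p] (A : Matrix l l' R) :
    A ⊗ₖ (1 : Matrix (n × p) (n × p) R) = leg12 (A ⊗ₖ (1 : Matrix n n R)) p := by
  rw [leg12, kronecker_assoc', one_kronecker_one]

theorem submatrix_leg13 [DecidableEq n] (U : Matrix (l × p) (l' × p') R) :
    (leg13 U n).submatrix (Equiv.prodSwapAssoc l n p) (Equiv.prodSwapAssoc l' n p') =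
      U ⊗ₖ (1 : Matrix n n R) := by
  simp [leg13]

end Legs

section Composition

variable {R : Type*} [Semifield R] {l m n p : Type*} [Fintype n]

theorem partialTrace_submatrix_leg12 [DecidableEq p] (B : Matrix (l × n) (m × n) R) :
    partialTrace ((leg12 B p).submatrix (Equiv.prodSwapAssoc l n p) (Equiv.prodSwapAssoc m n p)) =
      partialTrace B ⊗ₖ (1 : Matrix p p R) := by
  ext ⟨i, r⟩ ⟨j, r'⟩
  simp [partialTrace_apply, leg12_apply, Equiv.prodSwapAssoc, one_apply]

theorem partialTrace_conj_leg13_mul_leg12 [StarRing R] [DecidableEq n] [Fintype m] [DecidableEq m]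
    [Fintype p] [DecidableEq p] (U : Matrix (n × m) (n × m) R) (U' : Matrix (n × p) (n × p) R)
    (A : Matrix n n R) :
    partialTrace (leg13 U' m * leg12 U p * (A ⊗ₖ (1 : Matrix (m × p) (m × p) R)) *
        (leg13 U' m * leg12 U p)ᴴ) =
      partialTrace (U' * (partialTrace (U * (A ⊗ₖ (1 : Matrix m m R)) * Uᴴ) ⊗ₖ
        (1 : Matrix p p R)) * U'ᴴ) := by
  set B := U * (A ⊗ₖ (1 : Matrix m m R)) * Uᴴ
  have hinner : leg12 U p * (A ⊗ₖ 1) * (leg12 U p)ᴴ = leg12 B p := by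
    rw [kronecker_one_eq_leg12, conjTranspose_leg12, ← leg12_mul, ← leg12_mul]
  have houter : (leg13 U' m * leg12 B p * (leg13 U' m)ᴴ).submatrix (Equiv.prodSwapAssoc n m p)
        (Equiv.prodSwapAssoc n m p) =
      (U' ⊗ₖ 1) * (leg12 B p).submatrix (Equiv.prodSwapAssoc n m p) (Equiv.prodSwapAssoc n m p) *
        (U'ᴴ ⊗ₖ 1) := by
    rw [conjTranspose_leg13, ← submatrix_leg13, ← submatrix_leg13, submatrix_mul_equiv,
      submatrix_mul_equiv]
  calc _ = partialTrace (partialTrace ((leg13 U' m * leg12 B p * (leg13 U' m)ᴴ).submatrix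
        (Equiv.prodSwapAssoc n m p) (Equiv.prodSwapAssoc n m p))) := by
        rw [partialTrace_prod, conjTranspose_mul, ← hinner]
        simp only [Matrix.mul_assoc]
    _ = _ := by
      rw [houter, partialTrace_mul_kronecker_one, partialTrace_kronecker_one_mul,
        partialTrace_submatrix_leg12]

end Composition

end Matrix

theorem composition_matrix_factorizable_general
    (n m m' : ℕ)
    (q q' : Matrix (Fin n) (Fin n) ℂ → Matrix (Fin n) (Fin n) ℂ)
    (U : Matrix (Fin n × Fin m) (Fin n × Fin m) ℂ)
    (hU_unitary : U * Uᴴ = 1 ∧ Uᴴ * U = 1)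
    (hU_dil : ∀ (A : Matrix (Fin n) (Fin n) ℂ) (i j : Fin n),
      (1 / (m : ℂ)) * ∑ k : Fin m,
          (U * (A ⊗ₖ (1 : Matrix (Fin m) (Fin m) ℂ)) * Uᴴ) (i, k) (j, k) = q A i j)
    (U' : Matrix (Fin n × Fin m') (Fin n × Fin m') ℂ)
    (hU'_unitary : U' * U'ᴴ = 1 ∧ U'ᴴ * U' = 1)
    (hU'_dil : ∀ (A : Matrix (Fin n) (Fin n) ℂ) (i j : Fin n),
      (1 / (m' : ℂ)) * ∑ k : Fin m',
          (U' * (A ⊗ₖ (1 : Matrix (Fin m') (Fin m') ℂ)) * U'ᴴ) (i, k) (j, k) = q' A i j)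
    -- `U'₁₃`: `U'` acting on the first and third tensor factors
    (U13 : Matrix (Fin n × Fin m × Fin m') (Fin n × Fin m × Fin m') ℂ)
    (hU13 : ∀ (a b : Fin n) (k k' : Fin m) (l l' : Fin m'),
      U13 (a, k, l) (b, k', l') = (if k = k' then (1 : ℂ) else 0) * U' (a, l) (b, l'))
    -- `U₁₂ = U ⊗ I_{m'}`: `U` acting on the first and second tensor factors
    (U12 : Matrix (Fin n × Fin m × Fin m') (Fin n × Fin m × Fin m') ℂ)
    (hU12 : ∀ (a b : Fin n) (k k' : Fin m) (l l' : Fin m'),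
      U12 (a, k, l) (b, k', l') = U (a, k) (b, k') * (if l = l' then (1 : ℂ) else 0)) :
    ((U13 * U12) * (U13 * U12)ᴴ = 1 ∧ (U13 * U12)ᴴ * (U13 * U12) = 1) ∧
    ∀ (A : Matrix (Fin n) (Fin n) ℂ) (a b : Fin n),
      (1 / ((m : ℂ) * (m' : ℂ))) * ∑ k : Fin m, ∑ l : Fin m',
          ((U13 * U12) * (A ⊗ₖ (1 : Matrix (Fin m × Fin m') (Fin m × Fin m') ℂ))
              * (U13 * U12)ᴴ) (a, k, l) (b, k, l)
        = q' (q A) a b := by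
  have hU13_eq : U13 = leg13 U' (Fin m) := by
    ext ⟨a, k, l⟩ ⟨b, k', l'⟩
    rw [hU13, leg13_apply]
  have hU12_eq : U12 = leg12 U (Fin m') := by
    ext ⟨a, k, l⟩ ⟨b, k', l'⟩
    rw [hU12, leg12_apply]
  subst hU13_eq hU12_eq
  have hq : ∀ A, partialTrace (U * (A ⊗ₖ 1) * Uᴴ) = q A := fun A =>
    ext fun i j => by simpa [partialTrace_apply, one_div] using hU_dil A i j
  have hq' : ∀ A, partialTrace (U' * (A ⊗ₖ 1) * U'ᴴ) = q' A := fun A =>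
    ext fun i j => by simpa [partialTrace_apply, one_div] using hU'_dil A i j
  have hW := mul_mem
    (leg13_mem_unitary (n := Fin m) (mem_unitary_iff_conjTranspose.2 hU'_unitary))
    (leg12_mem_unitary (p := Fin m') (mem_unitary_iff_conjTranspose.2 hU_unitary))
  refine ⟨mem_unitary_iff_conjTranspose.1 hW, fun A a b => ?_⟩
  have h := congrFun₂ (partialTrace_conj_leg13_mul_leg12 U U' A) a b
  rw [hq, hq'] at h
  simpa [partialTrace_apply, Fintype.sum_prod_type, one_div] using h

/-- compositions of matrix factorizable channels are matrix factorizable: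
given unitary 1-dilations `U` of `q` (on `Mₙ ⊗ M_m`) and `U'` of `q'` (on `Mₙ ⊗ M_{m'}`),
the unitary `W = U'₁₃ · U₁₂` on `Mₙ ⊗ M_m ⊗ M_{m'}` is a matrix 1-dilation of `q' ∘ q`. -/
theorem composition_matrix_factorizable
    (n m m' p p' : ℕ) [NeZero n] [NeZero m] [NeZero m']
    (q q' : Matrix (Fin n) (Fin n) ℂ → Matrix (Fin n) (Fin n) ℂ)
    (qk : Fin p → Matrix (Fin n) (Fin n) ℂ)
    (hq : ∀ A, q A = ∑ k, qk k * A * (qk k)ᴴ)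
    (hq_unital : ∑ k, qk k * (qk k)ᴴ = 1)
    (hq_tp : ∑ k, (qk k)ᴴ * qk k = 1)
    (qk' : Fin p' → Matrix (Fin n) (Fin n) ℂ)
    (hq' : ∀ A, q' A = ∑ k, qk' k * A * (qk' k)ᴴ)
    (hq'_unital : ∑ k, qk' k * (qk' k)ᴴ = 1)
    (hq'_tp : ∑ k, (qk' k)ᴴ * qk' k = 1)
    (U : Matrix (Fin n × Fin m) (Fin n × Fin m) ℂ)
    (hU_unitary : U * Uᴴ = 1 ∧ Uᴴ * U = 1)
    (hU_dil : ∀ (A : Matrix (Fin n) (Fin n) ℂ) (i j : Fin n),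
      (1 / (m : ℂ)) * ∑ k : Fin m,
          (U * (A ⊗ₖ (1 : Matrix (Fin m) (Fin m) ℂ)) * Uᴴ) (i, k) (j, k) = q A i j)
    (U' : Matrix (Fin n × Fin m') (Fin n × Fin m') ℂ)
    (hU'_unitary : U' * U'ᴴ = 1 ∧ U'ᴴ * U' = 1)
    (hU'_dil : ∀ (A : Matrix (Fin n) (Fin n) ℂ) (i j : Fin n),
      (1 / (m' : ℂ)) * ∑ k : Fin m',
          (U' * (A ⊗ₖ (1 : Matrix (Fin m') (Fin m') ℂ)) * U'ᴴ) (i, k) (j, k) = q' A i j)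
    -- `U'₁₃`: `U'` acting on the first and third tensor factors
    (U13 : Matrix (Fin n × Fin m × Fin m') (Fin n × Fin m × Fin m') ℂ)
    (hU13 : ∀ (a b : Fin n) (k k' : Fin m) (l l' : Fin m'),
      U13 (a, k, l) (b, k', l') = (if k = k' then (1 : ℂ) else 0) * U' (a, l) (b, l'))
    -- `U₁₂ = U ⊗ I_{m'}`: `U` acting on the first and second tensor factors
    (U12 : Matrix (Fin n × Fin m × Fin m') (Fin n × Fin m × Fin m') ℂ)
    (hU12 : ∀ (a b : Fin n) (k k' : Fin m) (l l' : Fin m'),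
      U12 (a, k, l) (b, k', l') = U (a, k) (b, k') * (if l = l' then (1 : ℂ) else 0)) :
    ((U13 * U12) * (U13 * U12)ᴴ = 1 ∧ (U13 * U12)ᴴ * (U13 * U12) = 1) ∧
    ∀ (A : Matrix (Fin n) (Fin n) ℂ) (a b : Fin n),
      (1 / ((m : ℂ) * (m' : ℂ))) * ∑ k : Fin m, ∑ l : Fin m',
          ((U13 * U12) * (A ⊗ₖ (1 : Matrix (Fin m × Fin m') (Fin m × Fin m') ℂ))
              * (U13 * U12)ᴴ) (a, k, l) (b, k, l)
        = q' (q A) a b :=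
  composition_matrix_factorizable_general n m m' q q' U hU_unitary hU_dil U' hU'_unitary hU'_dil U13
    hU13 U12 hU12
end

section
/- Let C ∈ M_n be positive semidefinite with C i i = 1 for every i (a correlation matrix). Then there exist p and vectors v_1,…,v_p ∈ ℂⁿ such that, writing D_i = Matrix.diagonal (v_i), for every X ∈ M_n one has X ∘ C = Σ_{i=1}^p D_i * X * D_iᴴ, and moreover Σ_i D_i * D_iᴴ = 1 and Σ_i D_iᴴ * D_i = 1. That is, the Schur product channel q(X) = X ∘ C is a unital quantum channel with diagonal Kraus operators. -/
open Matrix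
open scoped ComplexOrder

/-!
Factor the correlation matrix as `C = W Wᴴ` and take the columns of `W` as the diagonals of the
Kraus operators: conjugating `X` by `diagonal w` multiplies its `(j, k)` entry by `w j * star (w k)`,
so summing over the columns multiplies it by `(W Wᴴ) j k = C j k`. Unitality is the case `X = 1`,
where `1 ∘ C` is the diagonal of `C`, and diagonal matrices commute with their adjoints.
-/

namespace Matrix

section DiagonalKraus

variable {ι n R : Type*} [Fintype ι] [Fintype n] [DecidableEq n] [CommRing R] [StarRing R]

theorem diagonal_mul_mul_conjTranspose_diagonal_apply (w : n → R) (X : Matrix n n R) (j k : n) :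
    (diagonal w * X * (diagonal w)ᴴ) j k = w j * X j k * star (w k) := by
  rw [diagonal_conjTranspose, mul_diagonal, diagonal_mul, Pi.star_apply]

theorem sum_diagonal_col_mul_mul_conjTranspose (W : Matrix n ι R) (X : Matrix n n R) :
    ∑ i, diagonal (fun j => W j i) * X * (diagonal fun j => W j i)ᴴ = X ⊙ (W * Wᴴ) := by
  ext j k
  rw [sum_apply, hadamard_apply, mul_apply, Finset.mul_sum]
  simp_rw [diagonal_mul_mul_conjTranspose_diagonal_apply, conjTranspose_apply]
  exact Finset.sum_congr rfl fun i _ => by ring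

theorem conjTranspose_diagonal_mul_diagonal (w : n → R) :
    (diagonal w)ᴴ * diagonal w = diagonal w * (diagonal w)ᴴ := by
  rw [diagonal_conjTranspose, diagonal_mul_diagonal, diagonal_mul_diagonal]
  exact congrArg diagonal (mul_comm _ _)

end DiagonalKraus

theorem PosSemidef.exists_eq_mul_conjTranspose {n 𝕜 : Type*} [Fintype n] [DecidableEq n]
    [RCLike 𝕜] {C : Matrix n n 𝕜} (hC : C.PosSemidef) : ∃ W : Matrix n n 𝕜, C = W * Wᴴ := by
  open scoped MatrixOrder in
  obtain ⟨B, hB⟩ := CStarAlgebra.nonneg_iff_eq_star_mul_self.mp hC.nonneg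
  exact ⟨Bᴴ, by rw [conjTranspose_conjTranspose]; exact hB⟩

end Matrix

/-- for any correlation matrix `C` (positive semidefinite with unit diagonal) the
Schur product channel `X ↦ X ∘ C` is a unital quantum channel with diagonal Kraus operators:
there exist vectors `vᵢ` with `X ∘ C = ∑ᵢ Dᵢ X Dᵢᴴ` for `Dᵢ = diagonal vᵢ`, and
`∑ᵢ Dᵢ Dᵢᴴ = 1 = ∑ᵢ Dᵢᴴ Dᵢ`. -/
theorem schur_product_channel_diagonal_kraus
    (n : ℕ) (C : Matrix (Fin n) (Fin n) ℂ)
    (hC : C.PosSemidef) (hdiag : ∀ i, C i i = 1) :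
    ∃ (p : ℕ) (v : Fin p → (Fin n → ℂ)),
      (∀ X : Matrix (Fin n) (Fin n) ℂ,
        Matrix.hadamard X C
          = ∑ i, Matrix.diagonal (v i) * X * (Matrix.diagonal (v i))ᴴ)
      ∧ ∑ i, Matrix.diagonal (v i) * (Matrix.diagonal (v i))ᴴ = 1
      ∧ ∑ i, (Matrix.diagonal (v i))ᴴ * Matrix.diagonal (v i) = 1 := by
  obtain ⟨W, rfl⟩ := hC.exists_eq_mul_conjTranspose
  have kraus (X : Matrix (Fin n) (Fin n) ℂ) :
      X ⊙ (W * Wᴴ) = ∑ i, diagonal (fun j => W j i) * X * (diagonal fun j => W j i)ᴴ :=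
    (sum_diagonal_col_mul_mul_conjTranspose W X).symm
  have unital : ∑ i, diagonal (fun j => W j i) * (diagonal fun j => W j i)ᴴ = 1 := by
    simpa only [mul_one, one_hadamard_eq_one_iff.mpr (funext hdiag)] using (kraus 1).symm
  refine ⟨n, fun i j => W j i, kraus, unital, ?_⟩
  simpa only [conjTranspose_diagonal_mul_diagonal] using unital
end

section
/- Let q be a unital quantum channel on M_n. Then the representing map T_q : A ↦ q(A) is a contraction on the GNS space: for every A ∈ M_n, Matrix.trace (q(A)ᴴ * q(A)) ≤ Matrix.trace (Aᴴ * A) (as real numbers, both traces being real and nonnegative). -/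
open Matrix

lemma trace_conjTranspose_mul_self_re_nonneg {n : ℕ} (M : Matrix (Fin n) (Fin n) ℂ) :
    0 ≤ (Matrix.trace (Mᴴ * M)).re := by
  simp only [Matrix.trace, Matrix.diag, Matrix.mul_apply, Matrix.conjTranspose_apply,
    Complex.re_sum]
  apply Finset.sum_nonneg; intro i _
  apply Finset.sum_nonneg; intro j _
  simp only [Complex.mul_re, Complex.conj_re, Complex.conj_im, RCLike.star_def, neg_mul,
    sub_neg_eq_add]
  exact add_nonneg (mul_self_nonneg _) (mul_self_nonneg _)

/-- Lemma `repcontract`: the representing map of a unital quantum channel on the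
tracial GNS space is a contraction: `tr(q(A)ᴴ q(A)) ≤ tr(Aᴴ A)` (as real numbers; both traces
are real and nonnegative). -/
theorem representing_map_contraction
    (n p : ℕ)
    (q : Matrix (Fin n) (Fin n) ℂ → Matrix (Fin n) (Fin n) ℂ)
    (qk : Fin p → Matrix (Fin n) (Fin n) ℂ)
    (hq : ∀ A, q A = ∑ k, qk k * A * (qk k)ᴴ)
    (hq_unital : ∑ k, qk k * (qk k)ᴴ = 1)
    (hq_tp : ∑ k, (qk k)ᴴ * qk k = 1) :
    ∀ A : Matrix (Fin n) (Fin n) ℂ,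
      (Matrix.trace ((q A)ᴴ * q A)).re ≤ (Matrix.trace (Aᴴ * A)).re := by
  intro A
  set B := q A with hB
  have hBdef : B = ∑ k, qk k * A * (qk k)ᴴ := hq A
  have hBH : Bᴴ = ∑ k, qk k * Aᴴ * (qk k)ᴴ := by
    rw [hBdef, Matrix.conjTranspose_sum]
    congr 1; funext k
    simp [Matrix.conjTranspose_mul, mul_assoc]
  -- key identity at the level of traces
  have key : Matrix.trace (∑ k, (A * (qk k)ᴴ - (qk k)ᴴ * B)ᴴ * (A * (qk k)ᴴ - (qk k)ᴴ * B))
      = Matrix.trace (Aᴴ * A) - Matrix.trace (Bᴴ * B) := by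
    have expand : ∀ k, (A * (qk k)ᴴ - (qk k)ᴴ * B)ᴴ * (A * (qk k)ᴴ - (qk k)ᴴ * B)
        = qk k * (Aᴴ * A) * (qk k)ᴴ - (qk k * Aᴴ * (qk k)ᴴ) * B
          - Bᴴ * (qk k * A * (qk k)ᴴ) + Bᴴ * (qk k * (qk k)ᴴ) * B := by
      intro k
      simp only [Matrix.conjTranspose_sub, Matrix.conjTranspose_mul,
        Matrix.conjTranspose_conjTranspose]
      noncomm_ring
    simp only [expand, Matrix.trace_sum, Matrix.trace_sub, Matrix.trace_add,
      Finset.sum_sub_distrib, Finset.sum_add_distrib]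
    have h1 : ∑ k, Matrix.trace (qk k * (Aᴴ * A) * (qk k)ᴴ) = Matrix.trace (Aᴴ * A) := by
      have : ∀ k, Matrix.trace (qk k * (Aᴴ * A) * (qk k)ᴴ)
          = Matrix.trace ((Aᴴ * A) * ((qk k)ᴴ * qk k)) := by
        intro k
        rw [Matrix.trace_mul_cycle, Matrix.trace_mul_comm]
      rw [Finset.sum_congr rfl (fun k _ => this k), ← Matrix.trace_sum,
        ← Finset.mul_sum, hq_tp, mul_one]
    have h2 : ∑ k, Matrix.trace ((qk k * Aᴴ * (qk k)ᴴ) * B) = Matrix.trace (Bᴴ * B) := by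
      rw [← Matrix.trace_sum, ← Finset.sum_mul, ← hBH]
    have h3 : ∑ k, Matrix.trace (Bᴴ * (qk k * A * (qk k)ᴴ)) = Matrix.trace (Bᴴ * B) := by
      rw [← Matrix.trace_sum, ← Finset.mul_sum, ← hBdef]
    have h4 : ∑ k, Matrix.trace (Bᴴ * (qk k * (qk k)ᴴ) * B) = Matrix.trace (Bᴴ * B) := by
      have : ∀ k, Bᴴ * (qk k * (qk k)ᴴ) * B = Bᴴ * ((qk k * (qk k)ᴴ) * B) := by
        intro k; rw [mul_assoc]
      rw [Finset.sum_congr rfl (fun k _ => congrArg Matrix.trace (this k)),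
        ← Matrix.trace_sum, ← Finset.mul_sum, ← Finset.sum_mul, hq_unital, one_mul]
    rw [h1, h2, h3, h4]
    ring
  have pos : 0 ≤ (Matrix.trace (∑ k, (A * (qk k)ᴴ - (qk k)ᴴ * B)ᴴ
      * (A * (qk k)ᴴ - (qk k)ᴴ * B))).re := by
    rw [Matrix.trace_sum, Complex.re_sum]
    exact Finset.sum_nonneg fun k _ => trace_conjTranspose_mul_self_re_nonneg _
  rw [key, Complex.sub_re] at pos
  linarith
end

section
/- Let q be a unital quantum channel on M_n. Then q is an isometry for the GNS norm, i.e. Matrix.trace (q(A)ᴴ * q(A)) = Matrix.trace (Aᴴ * A) for all A ∈ M_n, if and only if q is a *-automorphism of M_n, i.e. q is bijective and q(A * B) = q(A) * q(B) for all A, B ∈ M_n (and then automatically q(Aᴴ) = q(A)ᴴ). -/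
/-!
Write the channel as `q A = ∑ₖ Kₖ A Kₖᴴ`. Since `∑ₖ Kₖ Kₖᴴ = 1`, the Kadison–Schwarz defect is
a sum of squares,
`q (Aᴴ A) - (q A)ᴴ (q A) = ∑ₖ Zₖᴴ Zₖ` with `Zₖ = A Kₖᴴ - Kₖᴴ (q A)`,
and since `q` preserves the trace, the isometry property says exactly that this defect has trace
zero, i.e. that every `Zₖ` vanishes. But `B Kₖᴴ = Kₖᴴ (q B)` for all `k` gives
`q (A B) = ∑ₖ Kₖ A Kₖᴴ (q B) = q A * q B`. Conversely a multiplicative channel satisfies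
`(q A)ᴴ (q A) = q (Aᴴ A)`, which has the trace of `Aᴴ A`.
-/

open Matrix

namespace Matrix

variable {m n ι R : Type*} [Fintype m] [Fintype n] [Fintype ι]

section StarOrderedRing

variable [Ring R] [PartialOrder R] [StarRing R] [StarOrderedRing R] [NoZeroDivisors R]

theorem trace_sum_conjTranspose_mul_self_eq_zero_iff {Z : ι → Matrix m n R} :
    trace (∑ k, (Z k)ᴴ * Z k) = 0 ↔ ∀ k, Z k = 0 := by
  rw [trace_sum, Finset.sum_eq_zero_iff_of_nonneg fun k _ ↦
    (posSemidef_conjTranspose_mul_self (Z k)).trace_nonneg]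
  simp only [Finset.mem_univ, true_implies, trace_conjTranspose_mul_self_eq_zero_iff]

end StarOrderedRing

section CommRing

variable [CommRing R] [StarRing R]

def krausMap (K : ι → Matrix m m R) : Matrix m m R →ₗ[R] Matrix m m R where
  toFun A := ∑ k, K k * A * (K k)ᴴ
  map_add' A B := by simp only [Matrix.mul_add, Matrix.add_mul, Finset.sum_add_distrib]
  map_smul' c A := by
    simp only [Matrix.mul_smul, Matrix.smul_mul, Finset.smul_sum, RingHom.id_apply]

variable (K : ι → Matrix m m R)

theorem krausMap_apply (A : Matrix m m R) : krausMap K A = ∑ k, K k * A * (K k)ᴴ := rfl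

theorem conjTranspose_krausMap (A : Matrix m m R) : (krausMap K A)ᴴ = krausMap K Aᴴ := by
  simp only [krausMap_apply, conjTranspose_sum, conjTranspose_mul, conjTranspose_conjTranspose,
    Matrix.mul_assoc]

theorem trace_krausMap [DecidableEq m] (hK : ∑ k, (K k)ᴴ * K k = 1) (A : Matrix m m R) :
    trace (krausMap K A) = trace A := by
  simp_rw [krausMap_apply, trace_sum, trace_mul_cycle (K _), ← trace_sum, ← Finset.sum_mul, hK,
    Matrix.one_mul]

theorem krausMap_conjTranspose_mul_self_sub [DecidableEq m] (hK : ∑ k, K k * (K k)ᴴ = 1)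
    (A : Matrix m m R) :
    krausMap K (Aᴴ * A) - (krausMap K A)ᴴ * krausMap K A =
      ∑ k, (A * (K k)ᴴ - (K k)ᴴ * krausMap K A)ᴴ * (A * (K k)ᴴ - (K k)ᴴ * krausMap K A) := by
  set Q := krausMap K A
  have hQ : ∑ k, K k * A * (K k)ᴴ = Q := rfl
  have hQH : ∑ k, K k * Aᴴ * (K k)ᴴ = Qᴴ := (conjTranspose_krausMap K A).symm
  have hAA : ∑ k, K k * Aᴴ * (A * (K k)ᴴ) = krausMap K (Aᴴ * A) := by
    simp only [krausMap_apply, Matrix.mul_assoc]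
  have hQA : ∑ k, Qᴴ * K k * (A * (K k)ᴴ) = Qᴴ * Q := by
    rw [← hQ, Finset.mul_sum]
    simp only [Matrix.mul_assoc]
  have hAQ : ∑ k, K k * Aᴴ * ((K k)ᴴ * Q) = Qᴴ * Q := by
    rw [← hQH, Finset.sum_mul]
    simp only [Matrix.mul_assoc]
  have hQQ : ∑ k, Qᴴ * K k * ((K k)ᴴ * Q) = Qᴴ * Q := by
    calc _ = Qᴴ * (∑ k, K k * (K k)ᴴ) * Q := by
            simp only [Finset.mul_sum, Finset.sum_mul, Matrix.mul_assoc]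
      _ = Qᴴ * Q := by rw [hK, Matrix.mul_one]
  simp only [conjTranspose_sub, conjTranspose_mul, conjTranspose_conjTranspose, Matrix.sub_mul,
    Matrix.mul_sub, Finset.sum_sub_distrib, hAA, hQA, hAQ, hQQ]
  abel

theorem krausMap_mul_of_mul_conjTranspose_eq (B : Matrix m m R)
    (hB : ∀ k, B * (K k)ᴴ = (K k)ᴴ * krausMap K B) (A : Matrix m m R) :
    krausMap K (A * B) = krausMap K A * krausMap K B := by
  rw [krausMap_apply, krausMap_apply K A, Finset.sum_mul]
  refine Finset.sum_congr rfl fun k _ ↦ ?_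
  simp only [Matrix.mul_assoc, hB]

end CommRing

section Isometry

variable [CommRing R] [PartialOrder R] [StarRing R] [StarOrderedRing R] [NoZeroDivisors R]
  [DecidableEq m] {K : ι → Matrix m m R}

theorem krausMap_mul_of_isometry (hK : ∑ k, K k * (K k)ᴴ = 1) (hK' : ∑ k, (K k)ᴴ * K k = 1)
    (hiso : ∀ A, trace ((krausMap K A)ᴴ * krausMap K A) = trace (Aᴴ * A)) (A B : Matrix m m R) :
    krausMap K (A * B) = krausMap K A * krausMap K B := by
  refine krausMap_mul_of_mul_conjTranspose_eq K B (fun k ↦ sub_eq_zero.mp ?_) A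
  have hdefect : trace (krausMap K (Bᴴ * B) - (krausMap K B)ᴴ * krausMap K B) = 0 := by
    rw [trace_sub, trace_krausMap K hK', hiso, sub_self]
  rw [krausMap_conjTranspose_mul_self_sub K hK] at hdefect
  exact trace_sum_conjTranspose_mul_self_eq_zero_iff.mp hdefect k

end Isometry

theorem bijective_of_trace_conjTranspose_mul_self [Field R] [PartialOrder R] [StarRing R]
    [StarOrderedRing R] (f : Matrix m n R →ₗ[R] Matrix m n R)
    (hf : ∀ A, trace ((f A)ᴴ * f A) = trace (Aᴴ * A)) : Function.Bijective f := by
  have hinj : Function.Injective f := (injective_iff_map_eq_zero f).mpr fun A hA ↦ by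
    rw [← trace_conjTranspose_mul_self_eq_zero_iff, ← hf, hA, Matrix.mul_zero, trace_zero]
  exact ⟨hinj, LinearMap.injective_iff_surjective.mp hinj⟩

end Matrix

/-- Theorem `represent`, part 1: a unital quantum channel `q` on `Mₙ` is an
isometry for the GNS norm if and only if it is a `*`-automorphism of `Mₙ` (bijective and
multiplicative; adjoint-preservation is then automatic). -/
theorem representing_map_unitary_iff_automorphism
    (n p : ℕ)
    (q : Matrix (Fin n) (Fin n) ℂ → Matrix (Fin n) (Fin n) ℂ)
    (qk : Fin p → Matrix (Fin n) (Fin n) ℂ)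
    (hq : ∀ A, q A = ∑ k, qk k * A * (qk k)ᴴ)
    (hq_unital : ∑ k, qk k * (qk k)ᴴ = 1)
    (hq_tp : ∑ k, (qk k)ᴴ * qk k = 1) :
    (∀ A : Matrix (Fin n) (Fin n) ℂ,
        Matrix.trace ((q A)ᴴ * q A) = Matrix.trace (Aᴴ * A))
      ↔ (Function.Bijective q ∧ ∀ A B, q (A * B) = q A * q B) := by
  obtain rfl : q = krausMap qk := funext hq
  open scoped ComplexOrder in
  refine ⟨fun hiso ↦ ⟨bijective_of_trace_conjTranspose_mul_self _ hiso,
    krausMap_mul_of_isometry hq_unital hq_tp hiso⟩, fun ⟨_, hmul⟩ A ↦ ?_⟩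
  rw [conjTranspose_krausMap, ← hmul, trace_krausMap qk hq_tp]
end

section
/- Let q be a unital quantum channel on M_n. Then the following are equivalent: (i) q ∘ q = q and q is self-adjoint for the GNS inner product, i.e. tr_n(q(A)ᴴ * B) = tr_n(Aᴴ * q(B)) for all A, B ∈ M_n; (ii) q is the trace-preserving conditional expectation onto a unital *-subalgebra, i.e. q ∘ q = q, the range S of q contains 1 and is closed under multiplication and conjugate transpose, and q(B * A * B') = B * q(A) * B' for all A ∈ M_n and B, B' ∈ S. -/
open Matrix

private lemma myTraceCT (n : ℕ) (A : Matrix (Fin n) (Fin n) ℂ) :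
    trace (Aᴴ * A) = ((∑ i, ∑ j, Complex.normSq (A j i) : ℝ) : ℂ) := by
  simp only [trace, diag_apply, mul_apply, conjTranspose_apply]
  push_cast
  refine Finset.sum_congr rfl fun i _ => Finset.sum_congr rfl fun j _ => ?_
  rw [Complex.normSq_eq_conj_mul_self]; rfl

section main
variable {n p : ℕ}
  (q : Matrix (Fin n) (Fin n) ℂ → Matrix (Fin n) (Fin n) ℂ)
  (qk : Fin p → Matrix (Fin n) (Fin n) ℂ)

private lemma myTracePres
    (hq : ∀ A, q A = ∑ k, qk k * A * (qk k)ᴴ)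
    (hq_tp : ∑ k, (qk k)ᴴ * qk k = 1) (A : Matrix (Fin n) (Fin n) ℂ) :
    (q A).trace = A.trace := by
  rw [hq, trace_sum]
  calc ∑ k, (qk k * A * (qk k)ᴴ).trace = ∑ k, ((qk k)ᴴ * qk k * A).trace := by
        refine Finset.sum_congr rfl fun k _ => ?_
        rw [trace_mul_cycle, mul_assoc]
    _ = ((∑ k, (qk k)ᴴ * qk k) * A).trace := by rw [Finset.sum_mul, trace_sum]
    _ = A.trace := by rw [hq_tp, one_mul]

private lemma myStar
    (hq : ∀ A, q A = ∑ k, qk k * A * (qk k)ᴴ) (A : Matrix (Fin n) (Fin n) ℂ) :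
    q Aᴴ = (q A)ᴴ := by
  rw [hq, hq, conjTranspose_sum]
  refine Finset.sum_congr rfl fun k _ => ?_
  simp [conjTranspose_mul, mul_assoc]

/-- Key lemma: a fixed point of the channel commutes with every `(qk k)ᴴ`. -/
private lemma myCommute
    (hq : ∀ A, q A = ∑ k, qk k * A * (qk k)ᴴ)
    (hq_unital : ∑ k, qk k * (qk k)ᴴ = 1)
    (hq_tp : ∑ k, (qk k)ᴴ * qk k = 1)
    {X : Matrix (Fin n) (Fin n) ℂ} (hX : q X = X) (k : Fin p) :
    X * (qk k)ᴴ = (qk k)ᴴ * X := by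
  set M : Fin p → Matrix (Fin n) (Fin n) ℂ :=
    fun k => X * (qk k)ᴴ - (qk k)ᴴ * X with hM
  have hXs : q Xᴴ = Xᴴ := by rw [myStar q qk hq, hX]
  have hsum : ∑ k, (M k)ᴴ * M k = q (Xᴴ * X) - Xᴴ * X := by
    have expand : ∀ k, (M k)ᴴ * M k =
        qk k * (Xᴴ * X) * (qk k)ᴴ - qk k * Xᴴ * (qk k)ᴴ * X
          - Xᴴ * (qk k * X * (qk k)ᴴ) + Xᴴ * (qk k * (qk k)ᴴ) * X := by
      intro k
      simp only [hM, conjTranspose_sub, conjTranspose_mul, conjTranspose_conjTranspose]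
      noncomm_ring
    rw [Finset.sum_congr rfl fun k _ => expand k]
    simp only [Finset.sum_add_distrib, Finset.sum_sub_distrib]
    have h1 : ∑ k, qk k * (Xᴴ * X) * (qk k)ᴴ = q (Xᴴ * X) := (hq _).symm
    have h2 : ∑ k, qk k * Xᴴ * (qk k)ᴴ * X = Xᴴ * X := by
      rw [← Finset.sum_mul, ← hq, hXs]
    have h3 : ∑ k, Xᴴ * (qk k * X * (qk k)ᴴ) = Xᴴ * X := by
      rw [← Finset.mul_sum, ← hq, hX]
    have h4 : ∑ k, Xᴴ * (qk k * (qk k)ᴴ) * X = Xᴴ * X := by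
      have : ∑ k, Xᴴ * (qk k * (qk k)ᴴ) * X = Xᴴ * (∑ k, qk k * (qk k)ᴴ) * X := by
        rw [Finset.mul_sum, Finset.sum_mul]
      rw [this, hq_unital, mul_one]
    rw [h1, h2, h3, h4]
    abel
  have htr : (∑ k, trace ((M k)ᴴ * M k)) = 0 := by
    rw [← trace_sum, hsum, trace_sub, myTracePres q qk hq hq_tp, sub_self]
  have htr' : (∑ k, ∑ i, ∑ j, Complex.normSq (M k j i)) = 0 := by
    have : ((∑ k, ∑ i, ∑ j, Complex.normSq (M k j i) : ℝ) : ℂ) = 0 := by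
      push_cast
      rw [← htr]
      refine Finset.sum_congr rfl fun k _ => ?_
      rw [myTraceCT]; push_cast; ring
    exact_mod_cast this
  have hMk : M k = 0 := by
    ext i j
    have h1 : ∀ k ∈ Finset.univ, (0:ℝ) ≤ ∑ i, ∑ j, Complex.normSq (M k j i) :=
      fun k _ => Finset.sum_nonneg fun i _ => Finset.sum_nonneg fun j _ => Complex.normSq_nonneg _
    have h2 := (Finset.sum_eq_zero_iff_of_nonneg h1).mp htr' k (Finset.mem_univ k)
    have h3 : ∀ i ∈ Finset.univ, (0:ℝ) ≤ ∑ j, Complex.normSq (M k j i) :=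
      fun i _ => Finset.sum_nonneg fun j _ => Complex.normSq_nonneg _
    have h4 := (Finset.sum_eq_zero_iff_of_nonneg h3).mp h2 j (Finset.mem_univ j)
    have h5 := (Finset.sum_eq_zero_iff_of_nonneg
      (fun j' _ => Complex.normSq_nonneg (M k j' j))).mp h4 i (Finset.mem_univ i)
    simpa using Complex.normSq_eq_zero.mp h5
  have := sub_eq_zero.mp hMk
  exact this

end main

/-- Theorem `represent`, part 2: a unital quantum channel `q` on `Mₙ` is
idempotent and GNS-self-adjoint (i.e. its representing map is a projection) if and only if
`q` is the trace-preserving conditional expectation onto a unital `*`-subalgebra, namely its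
range. -/
theorem representing_map_projection_iff_conditional_expectation
    (n p : ℕ)
    (q : Matrix (Fin n) (Fin n) ℂ → Matrix (Fin n) (Fin n) ℂ)
    (qk : Fin p → Matrix (Fin n) (Fin n) ℂ)
    (hq : ∀ A, q A = ∑ k, qk k * A * (qk k)ᴴ)
    (hq_unital : ∑ k, qk k * (qk k)ᴴ = 1)
    (hq_tp : ∑ k, (qk k)ᴴ * qk k = 1) :
    (q ∘ q = q ∧ ∀ A B : Matrix (Fin n) (Fin n) ℂ,
        Matrix.trace ((q A)ᴴ * B) / (n : ℂ) = Matrix.trace (Aᴴ * q B) / (n : ℂ))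
      ↔ (q ∘ q = q
          ∧ (1 : Matrix (Fin n) (Fin n) ℂ) ∈ Set.range q
          ∧ (∀ X Y, X ∈ Set.range q → Y ∈ Set.range q → X * Y ∈ Set.range q)
          ∧ (∀ X, X ∈ Set.range q → Xᴴ ∈ Set.range q)
          ∧ (∀ (A B B' : Matrix (Fin n) (Fin n) ℂ),
              B ∈ Set.range q → B' ∈ Set.range q → q (B * A * B') = B * q A * B')) := by
  have hq1 : q 1 = 1 := by
    rw [hq]; simpa using hq_unital
  constructor
  · rintro ⟨hidem, _⟩
    -- every element of the range is a fixed point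
    have hfix : ∀ X ∈ Set.range q, q X = X := by
      rintro X ⟨A, rfl⟩
      exact congrFun hidem A
    -- fixed points commute with all Kraus operators (both ways)
    have hcommH : ∀ X ∈ Set.range q, ∀ k, X * (qk k)ᴴ = (qk k)ᴴ * X :=
      fun X hX k => myCommute q qk hq hq_unital hq_tp (hfix X hX) k
    have hmemH : ∀ X ∈ Set.range q, Xᴴ ∈ Set.range q := by
      rintro X hX
      exact ⟨Xᴴ, by rw [myStar q qk hq, hfix X hX]⟩
    have hcomm : ∀ X ∈ Set.range q, ∀ k, X * qk k = qk k * X := by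
      intro X hX k
      have h := hcommH Xᴴ (hmemH X hX) k
      calc X * qk k = ((qk k)ᴴ * Xᴴ)ᴴ := by simp
        _ = (Xᴴ * (qk k)ᴴ)ᴴ := by rw [h]
        _ = qk k * X := by simp
    refine ⟨hidem, ⟨1, hq1⟩, ?_, hmemH, ?_⟩
    · -- multiplicative closure
      intro X Y hX hY
      refine ⟨X * Y, ?_⟩
      rw [hq]
      have : ∀ k, qk k * (X * Y) * (qk k)ᴴ = X * (qk k * Y * (qk k)ᴴ) := by
        intro k
        calc qk k * (X * Y) * (qk k)ᴴ = (qk k * X) * (Y * (qk k)ᴴ) := by noncomm_ring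
          _ = (X * qk k) * (Y * (qk k)ᴴ) := by rw [← hcomm X hX k]
          _ = X * (qk k * Y * (qk k)ᴴ) := by noncomm_ring
      rw [Finset.sum_congr rfl fun k _ => this k, ← Finset.mul_sum, ← hq, hfix Y hY]
    · -- bimodule property
      intro A B B' hB hB'
      rw [hq, hq, Finset.mul_sum, Finset.sum_mul]
      refine Finset.sum_congr rfl fun k _ => ?_
      have h1 : qk k * B = B * qk k := (hcomm B hB k).symm
      have h2 : B' * (qk k)ᴴ = (qk k)ᴴ * B' := hcommH B' hB' k
      calc qk k * (B * A * B') * (qk k)ᴴ = (qk k * B) * A * (B' * (qk k)ᴴ) := by noncomm_ring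
        _ = (B * qk k) * A * ((qk k)ᴴ * B') := by rw [h1, h2]
        _ = B * (qk k * A * (qk k)ᴴ) * B' := by noncomm_ring
  · rintro ⟨hidem, h1, _, _, h5⟩
    refine ⟨hidem, fun A B => ?_⟩
    have key1 : trace ((q A)ᴴ * B) = trace (q Aᴴ * q B) := by
      rw [← myStar q qk hq]
      rw [← myTracePres q qk hq hq_tp (q Aᴴ * B)]
      have : q (q Aᴴ * B) = q Aᴴ * q B := by
        have := h5 B (q Aᴴ) 1 ⟨Aᴴ, rfl⟩ h1
        simpa using this
      rw [this]
    have key2 : trace (Aᴴ * q B) = trace (q Aᴴ * q B) := by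
      rw [← myTracePres q qk hq hq_tp (Aᴴ * q B)]
      have : q (Aᴴ * q B) = q Aᴴ * q B := by
        have := h5 Aᴴ 1 (q B) h1 ⟨B, rfl⟩
        simpa using this
      rw [this]
    rw [key1, key2]
end

section
/- Let q be a unital quantum channel on M_n and let S := (ker q)⊥ = {A ∈ M_n : tr_n(BᴴA) = 0 for every B with q(B) = 0} be the orthogonal complement of the kernel of q for the GNS inner product. Suppose q is isometric on S, i.e. Matrix.trace (q(A)ᴴ * q(A)) = Matrix.trace (Aᴴ * A) for all A ∈ S (so that the representing map T_q is a partial isometry). Then S is a unital *-subalgebra of M_n (1 ∈ S, S is closed under multiplication and conjugate transpose), and the restriction of q to S is an injective map satisfying q(A * B) = q(A) * q(B) and q(Aᴴ) = q(A)ᴴ for all A, B ∈ S; that is, q is a *-monomorphism of the unital *-subalgebra S composed with the orthogonal projection onto S. -/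
open Matrix

private lemma rmpi_trace_conj_self {n : ℕ} (N : Matrix (Fin n) (Fin n) ℂ) :
    trace (Nᴴ * N) = ((∑ i, ∑ j, Complex.normSq (N j i) : ℝ) : ℂ) := by
  simp only [trace, diag, mul_apply, conjTranspose_apply]
  push_cast
  congr 1; ext i; congr 1; ext j
  rw [Complex.normSq_eq_conj_mul_self]
  rfl

private lemma rmpi_eq_zero_of_trace {n : ℕ} (N : Matrix (Fin n) (Fin n) ℂ)
    (h : trace (Nᴴ * N) = 0) : N = 0 := by
  rw [rmpi_trace_conj_self] at h
  norm_cast at h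
  have h2 := (Finset.sum_eq_zero_iff_of_nonneg (fun i _ => Finset.sum_nonneg
    (fun j _ => Complex.normSq_nonneg _))).mp h
  ext j i
  have := (Finset.sum_eq_zero_iff_of_nonneg (fun j _ => Complex.normSq_nonneg _)).mp
    (h2 i (Finset.mem_univ i)) j (Finset.mem_univ j)
  simpa using Complex.normSq_eq_zero.mp this

private lemma rmpi_all_zero {n p : ℕ} (N : Fin p → Matrix (Fin n) (Fin n) ℂ)
    (h : ∑ k, trace ((N k)ᴴ * N k) = 0) : ∀ k, N k = 0 := by
  simp only [rmpi_trace_conj_self] at h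
  norm_cast at h
  intro k
  apply rmpi_eq_zero_of_trace
  rw [rmpi_trace_conj_self]
  norm_cast
  exact (Finset.sum_eq_zero_iff_of_nonneg (fun k _ => Finset.sum_nonneg fun i _ =>
    Finset.sum_nonneg fun j _ => Complex.normSq_nonneg _)).mp h k (Finset.mem_univ k)

/-- Theorem `represent`, part 3: if the representing map of a unital quantum
channel `q` on `Mₙ` is a partial isometry — i.e. `q` is GNS-isometric on
`S = (ker q)^⊥` — then `S` is a unital `*`-subalgebra and `q` restricted to `S` is a
`*`-monomorphism; so `q` is a `*`-monomorphism of a unital `*`-subalgebra composed with the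
orthogonal projection onto it. -/
theorem representing_map_partial_isometry
    (n p : ℕ)
    (q : Matrix (Fin n) (Fin n) ℂ → Matrix (Fin n) (Fin n) ℂ)
    (qk : Fin p → Matrix (Fin n) (Fin n) ℂ)
    (hq : ∀ A, q A = ∑ k, qk k * A * (qk k)ᴴ)
    (hq_unital : ∑ k, qk k * (qk k)ᴴ = 1)
    (hq_tp : ∑ k, (qk k)ᴴ * qk k = 1)
    (S : Set (Matrix (Fin n) (Fin n) ℂ))
    (hS : S = {A | ∀ B, q B = 0 → Matrix.trace (Bᴴ * A) / (n : ℂ) = 0})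
    (hiso : ∀ A ∈ S, Matrix.trace ((q A)ᴴ * q A) = Matrix.trace (Aᴴ * A)) :
    (1 : Matrix (Fin n) (Fin n) ℂ) ∈ S
    ∧ (∀ A ∈ S, ∀ B ∈ S, A * B ∈ S)
    ∧ (∀ A ∈ S, Aᴴ ∈ S)
    ∧ Set.InjOn q S
    ∧ (∀ A ∈ S, ∀ B ∈ S, q (A * B) = q A * q B)
    ∧ (∀ A ∈ S, q Aᴴ = (q A)ᴴ) := by
  -- q commutes with conjTranspose
  have hadj : ∀ A, q Aᴴ = (q A)ᴴ := by
    intro A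
    rw [hq, hq, conjTranspose_sum]
    refine Finset.sum_congr rfl fun k _ => ?_
    simp [conjTranspose_mul, Matrix.mul_assoc]
  -- q is trace preserving
  have htr : ∀ A, trace (q A) = trace A := by
    intro A
    rw [hq, trace_sum]
    calc ∑ k, trace (qk k * A * (qk k)ᴴ)
        = ∑ k, trace (A * ((qk k)ᴴ * qk k)) := by
          refine Finset.sum_congr rfl fun k _ => ?_
          rw [trace_mul_comm, ← mul_assoc, trace_mul_comm]
      _ = trace (A * ∑ k, (qk k)ᴴ * qk k) := by rw [Finset.mul_sum, trace_sum]
      _ = trace A := by rw [hq_tp, mul_one]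
  -- membership characterization without the normalization
  have hmem : ∀ A, A ∈ S ↔ ∀ B, q B = 0 → trace (Bᴴ * A) = 0 := by
    intro A
    rw [hS]; simp only [Set.mem_setOf_eq]
    constructor
    · intro h B hB
      rcases div_eq_zero_iff.mp (h B hB) with h' | h'
      · exact h'
      · have hn : n = 0 := by exact_mod_cast h'
        subst hn
        simp [trace]
    · intro h B hB
      rw [h B hB, zero_div]
  -- sandwich lemma
  have hsand : ∀ P Q : Matrix (Fin n) (Fin n) ℂ,
      ∑ k, (P * qk k) * ((qk k)ᴴ * Q) = P * Q := by
    intro P Q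
    have h1 : P * Q = P * ((∑ k, qk k * (qk k)ᴴ) * Q) := by rw [hq_unital, one_mul]
    rw [h1, Finset.sum_mul, Finset.mul_sum]
    simp [mul_assoc]
  -- key commutation relations on S
  have hkey : ∀ A ∈ S, ∀ k, (qk k)ᴴ * q A = A * (qk k)ᴴ ∧ qk k * A = q A * qk k := by
    intro A hA
    have hisoA := hiso A hA
    -- first family
    have key1 : ∑ k, (((qk k)ᴴ * q A - A * (qk k)ᴴ)ᴴ * ((qk k)ᴴ * q A - A * (qk k)ᴴ))
        = q (Aᴴ * A) - (q A)ᴴ * q A := by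
      have h1 : ∑ k, ((q A)ᴴ * qk k) * ((qk k)ᴴ * q A) = (q A)ᴴ * q A := hsand _ _
      have h2 : ∑ k, ((q A)ᴴ * qk k) * (A * (qk k)ᴴ) = (q A)ᴴ * q A := by
        calc ∑ k, ((q A)ᴴ * qk k) * (A * (qk k)ᴴ)
            = (q A)ᴴ * ∑ k, qk k * A * (qk k)ᴴ := by
              rw [Finset.mul_sum]
              exact Finset.sum_congr rfl fun k _ => by noncomm_ring
          _ = (q A)ᴴ * q A := by rw [← hq]
      have h3 : ∑ k, (qk k * Aᴴ) * ((qk k)ᴴ * q A) = (q A)ᴴ * q A := by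
        calc ∑ k, (qk k * Aᴴ) * ((qk k)ᴴ * q A)
            = (∑ k, qk k * Aᴴ * (qk k)ᴴ) * q A := by
              rw [Finset.sum_mul]
              exact Finset.sum_congr rfl fun k _ => by noncomm_ring
          _ = q Aᴴ * q A := by rw [← hq]
          _ = (q A)ᴴ * q A := by rw [hadj]
      have h4 : ∑ k, (qk k * Aᴴ) * (A * (qk k)ᴴ) = q (Aᴴ * A) := by
        rw [hq]
        exact Finset.sum_congr rfl fun k _ => by noncomm_ring
      calc ∑ k, (((qk k)ᴴ * q A - A * (qk k)ᴴ)ᴴ * ((qk k)ᴴ * q A - A * (qk k)ᴴ))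
          = ∑ k, (((q A)ᴴ * qk k) * ((qk k)ᴴ * q A) - ((q A)ᴴ * qk k) * (A * (qk k)ᴴ)
              - (qk k * Aᴴ) * ((qk k)ᴴ * q A) + (qk k * Aᴴ) * (A * (qk k)ᴴ)) := by
            refine Finset.sum_congr rfl fun k _ => ?_
            simp only [conjTranspose_sub, conjTranspose_mul, conjTranspose_conjTranspose]
            noncomm_ring
        _ = (q A)ᴴ * q A - (q A)ᴴ * q A - (q A)ᴴ * q A + q (Aᴴ * A) := by
            rw [Finset.sum_add_distrib, Finset.sum_sub_distrib, Finset.sum_sub_distrib,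
              h1, h2, h3, h4]
        _ = q (Aᴴ * A) - (q A)ᴴ * q A := by abel
    have hN : ∀ k, (qk k)ᴴ * q A - A * (qk k)ᴴ = 0 := by
      apply rmpi_all_zero
      rw [← trace_sum, key1, trace_sub, htr, hisoA, sub_self]
    -- second family
    have key2 : ∑ k, ((qk k * A - q A * qk k)ᴴᴴ * (qk k * A - q A * qk k)ᴴ)
        = q (A * Aᴴ) - q A * (q A)ᴴ := by
      have g1 : ∑ k, (qk k * A) * (Aᴴ * (qk k)ᴴ) = q (A * Aᴴ) := by
        rw [hq]
        exact Finset.sum_congr rfl fun k _ => by noncomm_ring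
      have g2 : ∑ k, (qk k * A) * ((qk k)ᴴ * (q A)ᴴ) = q A * (q A)ᴴ := by
        calc ∑ k, (qk k * A) * ((qk k)ᴴ * (q A)ᴴ)
            = (∑ k, qk k * A * (qk k)ᴴ) * (q A)ᴴ := by
              rw [Finset.sum_mul]
              exact Finset.sum_congr rfl fun k _ => by noncomm_ring
          _ = q A * (q A)ᴴ := by rw [← hq]
      have g3 : ∑ k, (q A * qk k) * (Aᴴ * (qk k)ᴴ) = q A * (q A)ᴴ := by
        calc ∑ k, (q A * qk k) * (Aᴴ * (qk k)ᴴ)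
            = q A * ∑ k, qk k * Aᴴ * (qk k)ᴴ := by
              rw [Finset.mul_sum]
              exact Finset.sum_congr rfl fun k _ => by noncomm_ring
          _ = q A * q Aᴴ := by rw [← hq]
          _ = q A * (q A)ᴴ := by rw [hadj]
      have g4 : ∑ k, (q A * qk k) * ((qk k)ᴴ * (q A)ᴴ) = q A * (q A)ᴴ := hsand _ _
      calc ∑ k, ((qk k * A - q A * qk k)ᴴᴴ * (qk k * A - q A * qk k)ᴴ)
          = ∑ k, ((qk k * A) * (Aᴴ * (qk k)ᴴ) - (qk k * A) * ((qk k)ᴴ * (q A)ᴴ)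
              - (q A * qk k) * (Aᴴ * (qk k)ᴴ) + (q A * qk k) * ((qk k)ᴴ * (q A)ᴴ)) := by
            refine Finset.sum_congr rfl fun k _ => ?_
            simp only [conjTranspose_sub, conjTranspose_mul, conjTranspose_conjTranspose]
            noncomm_ring
        _ = q (A * Aᴴ) - q A * (q A)ᴴ - q A * (q A)ᴴ + q A * (q A)ᴴ := by
            rw [Finset.sum_add_distrib, Finset.sum_sub_distrib, Finset.sum_sub_distrib,
              g1, g2, g3, g4]
        _ = q (A * Aᴴ) - q A * (q A)ᴴ := by abel
    have hM : ∀ k, (qk k * A - q A * qk k)ᴴ = 0 := by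
      apply rmpi_all_zero
      rw [← trace_sum, key2, trace_sub, htr]
      rw [trace_mul_comm A Aᴴ, trace_mul_comm (q A) (q A)ᴴ, hisoA, sub_self]
    intro k
    refine ⟨sub_eq_zero.mp (hN k), ?_⟩
    have := hM k
    rw [conjTranspose_eq_zero] at this
    exact sub_eq_zero.mp this
  -- q is linear enough
  have hqsub : ∀ A B, q (A - B) = q A - q B := by
    intro A B
    rw [hq, hq, hq, ← Finset.sum_sub_distrib]
    exact Finset.sum_congr rfl fun k _ => by noncomm_ring
  refine ⟨?_, ?_, ?_, ?_, ?_, fun A _ => hadj A⟩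
  · -- 1 ∈ S
    rw [hmem]
    intro B hB
    have hB0 : trace B = 0 := by rw [← htr, hB, trace_zero]
    rw [mul_one, trace_conjTranspose, hB0, star_zero]
  · -- closed under multiplication
    intro A hA B hB
    rw [hmem]
    intro C hC
    have hABrep : A * B = ∑ k, (qk k)ᴴ * (q A * q B) * qk k := by
      symm
      calc ∑ k, (qk k)ᴴ * (q A * q B) * qk k
          = ∑ k, A * B * ((qk k)ᴴ * qk k) := by
            refine Finset.sum_congr rfl fun k _ => ?_
            have h1 := (hkey A hA k).1
            have h2 := (hkey B hB k).1
            calc (qk k)ᴴ * (q A * q B) * qk k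
                = ((qk k)ᴴ * q A) * (q B * qk k) := by noncomm_ring
              _ = (A * (qk k)ᴴ) * (q B * qk k) := by rw [h1]
              _ = A * (((qk k)ᴴ * q B) * qk k) := by noncomm_ring
              _ = A * ((B * (qk k)ᴴ) * qk k) := by rw [h2]
              _ = A * B * ((qk k)ᴴ * qk k) := by noncomm_ring
        _ = A * B := by rw [← Finset.mul_sum, hq_tp, mul_one]
    have hCt : q Cᴴ = 0 := by rw [hadj, hC, conjTranspose_zero]
    calc trace (Cᴴ * (A * B))
        = trace (Cᴴ * ∑ k, (qk k)ᴴ * (q A * q B) * qk k) := by rw [← hABrep]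
      _ = ∑ k, trace (Cᴴ * ((qk k)ᴴ * (q A * q B) * qk k)) := by
          rw [Finset.mul_sum, trace_sum]
      _ = ∑ k, trace ((qk k * Cᴴ * (qk k)ᴴ) * (q A * q B)) := by
          refine Finset.sum_congr rfl fun k _ => ?_
          have e1 : Cᴴ * ((qk k)ᴴ * (q A * q B) * qk k)
              = (Cᴴ * ((qk k)ᴴ * (q A * q B))) * qk k := by noncomm_ring
          have e2 : qk k * (Cᴴ * ((qk k)ᴴ * (q A * q B)))
              = (qk k * Cᴴ * (qk k)ᴴ) * (q A * q B) := by noncomm_ring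
          rw [e1, trace_mul_comm, e2]
      _ = trace ((∑ k, qk k * Cᴴ * (qk k)ᴴ) * (q A * q B)) := by
          rw [Finset.sum_mul, trace_sum]
      _ = 0 := by rw [← hq, hCt, zero_mul, trace_zero]
  · -- closed under conjTranspose
    intro A hA
    rw [hmem] at hA ⊢
    intro C hC
    have hCt : q Cᴴ = 0 := by rw [hadj, hC, conjTranspose_zero]
    have h1 : trace (C * A) = 0 := by
      have := hA Cᴴ hCt
      rwa [conjTranspose_conjTranspose] at this
    calc trace (Cᴴ * Aᴴ) = trace ((A * C)ᴴ) := by rw [conjTranspose_mul]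
      _ = star (trace (A * C)) := trace_conjTranspose _
      _ = star (trace (C * A)) := by rw [trace_mul_comm]
      _ = 0 := by rw [h1, star_zero]
  · -- injective on S
    intro A hA B hB hAB
    have hqD : q (A - B) = 0 := by rw [hqsub, hAB, sub_self]
    have hDmem : ∀ C, q C = 0 → trace (Cᴴ * (A - B)) = 0 := by
      intro C hC
      rw [mul_sub, trace_sub, (hmem A).mp hA C hC, (hmem B).mp hB C hC, sub_self]
    have h0 : trace ((A - B)ᴴ * (A - B)) = 0 := hDmem (A - B) hqD
    have := rmpi_eq_zero_of_trace _ h0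
    exact sub_eq_zero.mp this
  · -- multiplicative
    intro A hA B hB
    calc q (A * B) = ∑ k, qk k * (A * B) * (qk k)ᴴ := hq _
      _ = ∑ k, q A * (qk k * B * (qk k)ᴴ) := by
          refine Finset.sum_congr rfl fun k _ => ?_
          have h1 := (hkey A hA k).2
          calc qk k * (A * B) * (qk k)ᴴ = (qk k * A) * (B * (qk k)ᴴ) := by noncomm_ring
            _ = (q A * qk k) * (B * (qk k)ᴴ) := by rw [h1]
            _ = q A * (qk k * B * (qk k)ᴴ) := by noncomm_ring
      _ = q A * q B := by rw [← Finset.mul_sum, ← hq]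
end

section
/- Let K be a finite-dimensional complex inner product space, U : K → K a unitary linear map, H ⊆ K a subspace with orthogonal projection P : K → K onto H, and T : H → H a linear map. Suppose that for every integer k ≥ 1 and every x ∈ H, T^k x = P (U^k x) (i.e. U is a unitary power dilation of T). Then T is unitary on H: ‖T x‖ = ‖x‖ for all x ∈ H and T is surjective. Equivalently, a contraction on a finite-dimensional space admitting a unitary power dilation on a finite-dimensional space is itself unitary. -/
/-!
A unitary on a finite-dimensional space is recurrent: its orbits are bounded, hence
precompact, so some power `U^k` with `k ≥ 1` moves a given `x` arbitrarily little. Compressing to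
`H`, the contraction `T^k = P U^k` then also moves `x` arbitrarily little, whence
`‖x‖ ≤ ‖T^k x‖ + ε ≤ ‖T x‖ + ε` for every `ε > 0`, i.e. `T` is an isometry. An injective
endomorphism of a finite-dimensional space is surjective.
-/

open Function

theorem Isometry.iterate {α : Type*} [PseudoEMetricSpace α] {f : α → α} (hf : Isometry f)
    (n : ℕ) : Isometry f^[n] := by
  induction n with
  | zero => exact isometry_id
  | succ n ih => exact ih.comp hf

theorem Isometry.exists_iterate_dist_lt {α : Type*} [PseudoMetricSpace α] {f : α → α}
    (hf : Isometry f) {s : Set α} (hs : IsCompact s) {x : α} (hx : ∀ n, f^[n] x ∈ s)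
    {ε : ℝ} (hε : 0 < ε) : ∃ k, 1 ≤ k ∧ dist (f^[k] x) x < ε := by
  obtain ⟨a, -, φ, hφ, hlim⟩ := hs.tendsto_subseq hx
  obtain ⟨N, hN⟩ := Metric.cauchySeq_iff'.1 hlim.cauchySeq ε hε
  have hlt : φ N < φ (N + 1) := hφ N.lt_succ_self
  refine ⟨φ (N + 1) - φ N, by omega, ?_⟩
  have hsplit : f^[φ (N + 1)] x = f^[φ N] (f^[φ (N + 1) - φ N] x) := by
    rw [← iterate_add_apply, Nat.add_sub_cancel' hlt.le]
  calc dist (f^[φ (N + 1) - φ N] x) x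
      = dist (f^[φ N] (f^[φ (N + 1) - φ N] x)) (f^[φ N] x) := ((hf.iterate _).dist_eq _ _).symm
    _ = dist (((fun n ↦ f^[n] x) ∘ φ) (N + 1)) (((fun n ↦ f^[n] x) ∘ φ) N) := by
        rw [comp_apply, comp_apply, hsplit]
    _ < ε := hN _ N.le_succ

theorem Isometry.exists_iterate_dist_lt_of_apply_eq {α : Type*} [PseudoMetricSpace α]
    [ProperSpace α] {f : α → α} (hf : Isometry f) {c : α} (hc : f c = c) (x : α) {ε : ℝ}
    (hε : 0 < ε) : ∃ k, 1 ≤ k ∧ dist (f^[k] x) x < ε := by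
  refine hf.exists_iterate_dist_lt (isCompact_closedBall c (dist x c)) (fun n ↦ ?_) hε
  have horbit := (hf.iterate n).dist_eq x c
  rw [iterate_fixed hc n] at horbit
  exact horbit.le

section Contraction

variable {E : Type*} [SeminormedAddCommGroup E] {f : E → E}

theorem norm_iterate_apply_le (hf : ∀ y, ‖f y‖ ≤ ‖y‖) (n : ℕ) (y : E) : ‖f^[n] y‖ ≤ ‖y‖ := by
  induction n generalizing y with
  | zero => rfl
  | succ n ih => exact (ih (f y)).trans (hf y)

theorem norm_apply_eq_of_forall_exists_iterate_dist_lt (hf : ∀ y, ‖f y‖ ≤ ‖y‖) {x : E}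
    (hx : ∀ ε > 0, ∃ k, 1 ≤ k ∧ dist (f^[k] x) x < ε) : ‖f x‖ = ‖x‖ := by
  refine le_antisymm (hf x) (le_of_forall_pos_lt_add fun ε hε ↦ ?_)
  obtain ⟨k, hk, hdist⟩ := hx ε hε
  obtain ⟨m, rfl⟩ := Nat.exists_eq_add_of_le' hk
  calc ‖x‖ ≤ ‖f^[m + 1] x‖ + ‖f^[m + 1] x - x‖ := norm_le_norm_add_norm_sub _ _
    _ < ‖f x‖ + ε :=
        add_lt_add_of_le_of_lt (norm_iterate_apply_le hf m (f x)) (by rwa [← dist_eq_norm])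

end Contraction

theorem power_dilation_finite_dim_forces_unitary_general
    (K : Type*) [NormedAddCommGroup K] [InnerProductSpace ℂ K] [FiniteDimensional ℂ K]
    (U : K →ₗ[ℂ] K) (hU_iso : ∀ x : K, ‖U x‖ = ‖x‖)
    (H : Submodule ℂ K)
    (T : H →ₗ[ℂ] H)
    (hdil : ∀ (k : ℕ), 1 ≤ k → ∀ x : H,
      (T ^ k) x = Submodule.orthogonalProjection H ((U ^ k) (x : K))) :
    (∀ x : H, ‖T x‖ = ‖x‖) ∧ Function.Surjective T := by
  have hU : Isometry U := AddMonoidHomClass.isometry_of_norm U hU_iso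
  have hP : ∀ z : K, ‖H.orthogonalProjectionOnto z‖ ≤ ‖z‖ :=
    H.norm_orthogonalProjectionOnto_apply_le
  have hT (y : H) : ‖T y‖ ≤ ‖y‖ := by
    rw [← pow_one T, hdil 1 le_rfl y, pow_one]
    exact (hP _).trans_eq (hU_iso _)
  have hrec (x : H) : ∀ ε > 0, ∃ k, 1 ≤ k ∧ dist (T^[k] x) x < ε := by
    intro ε hε
    obtain ⟨k, hk, hUk⟩ := hU.exists_iterate_dist_lt_of_apply_eq (map_zero U) (x : K) hε
    have hcompress : T^[k] x - x = H.orthogonalProjectionOnto (U^[k] x - x) := by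
      rw [map_sub, ← Module.End.pow_apply, ← Module.End.pow_apply, hdil k hk,
        H.orthogonalProjectionOnto_mem_subspace_eq_self]
    refine ⟨k, hk, lt_of_le_of_lt ?_ hUk⟩
    rw [dist_eq_norm, dist_eq_norm, hcompress]
    exact hP _
  have hiso (x : H) : ‖T x‖ = ‖x‖ := norm_apply_eq_of_forall_exists_iterate_dist_lt hT (hrec x)
  exact ⟨hiso,
    LinearMap.injective_iff_surjective.mp (AddMonoidHomClass.isometry_of_norm T hiso).injective⟩

/-- a contraction on a finite-dimensional complex inner product space that
admits a unitary power dilation acting on a finite-dimensional space is itself unitary: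
if `U` is a unitary on `K`, `H ⊆ K` a subspace with orthogonal projection `P`, and
`T : H → H` satisfies `T^k x = P (U^k x)` for all `k ≥ 1`, then `T` is a surjective
isometry. -/
theorem power_dilation_finite_dim_forces_unitary
    (K : Type*) [NormedAddCommGroup K] [InnerProductSpace ℂ K] [FiniteDimensional ℂ K]
    (U : K →ₗ[ℂ] K) (hU_iso : ∀ x : K, ‖U x‖ = ‖x‖) (hU_surj : Function.Surjective U)
    (H : Submodule ℂ K)
    (T : H →ₗ[ℂ] H)
    (hdil : ∀ (k : ℕ), 1 ≤ k → ∀ x : H,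
      (T ^ k) x = Submodule.orthogonalProjection H ((U ^ k) (x : K))) :
    (∀ x : H, ‖T x‖ = ‖x‖) ∧ Function.Surjective T :=
  power_dilation_finite_dim_forces_unitary_general K U hU_iso H T hdil
end
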